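/- arXiv:2504.12453 — 11 statements merged into one kernel-verified Lean document; each statement's English description precedes it below -/
import Mathlib

section
/- Let α, λ ∈ ℤ and let m ≥ 1 be an integer with gcd(λ, m) = 1. Then there exists a unique integer t with 0 ≤ t ≤ m−1 such that α + tλ ≡ 0 (mod m). Moreover, for every i ∈ ℤ: if i ≡ t (mod m), then ⌊(α+iλ)/m⌋ = ⌊(α−1+iλ)/m⌋ + 1 = ⌈α/m⌉ + ⌊iλ/m⌋; and if i ≢ t (mod m), then ⌊(α+iλ)/m⌋ = ⌊(α−1+iλ)/m⌋. -/
private lemma myfloor (n m : ℤ) (hm : 0 < m) : ⌊((n : ℚ) / (m : ℚ))⌋ = n / m := by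
  lift m to ℕ using hm.le
  exact_mod_cast Rat.floor_intCast_div_natCast n m

private lemma myceil (n m : ℤ) (hm : 0 < m) : ⌈((n : ℚ) / (m : ℚ))⌉ = -((-n) / m) := by
  rw [show ((n : ℚ) / (m : ℚ)) = -(((-n : ℤ) : ℚ) / (m : ℚ)) by push_cast; ring,
    Int.ceil_neg, myfloor _ _ hm]

private lemma div_sub_one_dvd (m x : ℤ) (hm : 0 < m) (h : m ∣ x) :
    x / m = (x - 1) / m + 1 := by
  obtain ⟨k, rfl⟩ := h
  have h1 : (m * k) / m = k := Int.mul_ediv_cancel_left _ hm.ne'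
  have h2 : (m * k - 1) / m = k - 1 :=
    ((Int.ediv_emod_unique (a := m * k - 1) (b := m) (r := m - 1) (q := k - 1) hm).mpr
      ⟨by ring, by omega, by omega⟩).1
  rw [h1, h2]; ring

private lemma div_sub_one_not_dvd (m x : ℤ) (hm : 0 < m) (h : ¬ m ∣ x) :
    x / m = (x - 1) / m := by
  have hr0 : 0 ≤ x % m := Int.emod_nonneg _ hm.ne'
  have hrm : x % m < m := Int.emod_lt_of_pos _ hm
  have hr1 : x % m ≠ 0 := fun hc => h (Int.dvd_of_emod_eq_zero hc)
  have hx : m * (x / m) + x % m = x := Int.mul_ediv_add_emod x m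
  have h2 : (x - 1) / m = x / m :=
    ((Int.ediv_emod_unique (a := x - 1) (b := m) (r := x % m - 1) (q := x / m) hm).mpr
      ⟨by omega, by omega, by omega⟩).1
  omega

private lemma div_split (m a b : ℤ) (hm : 0 < m) (h : m ∣ a + b) :
    (a + b) / m = -((-a) / m) + b / m := by
  obtain ⟨k, hk⟩ := h
  have hb : m * (b / m) + b % m = b := Int.mul_ediv_add_emod b m
  have hr0 : 0 ≤ b % m := Int.emod_nonneg _ hm.ne'
  have hrm : b % m < m := Int.emod_lt_of_pos _ hm
  have h1 : (a + b) / m = k := by rw [hk]; exact Int.mul_ediv_cancel_left _ hm.ne'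
  have h2 : (-a) / m = b / m - k :=
    ((Int.ediv_emod_unique (a := -a) (b := m) (r := b % m) (q := b / m - k) hm).mpr
      ⟨by rw [mul_sub]; omega, hr0, hrm⟩).1
  omega

/-- **Lemma 2.8.** Let `a, l ∈ ℤ` and `m ≥ 1` with `gcd(l, m) = 1`. There is a unique
`t ∈ {0, …, m−1}` with `a + t·l ≡ 0 (mod m)`; moreover, for every `i ∈ ℤ`,
if `i ≡ t (mod m)` then `⌊(a+il)/m⌋ = ⌊(a−1+il)/m⌋ + 1 = ⌈a/m⌉ + ⌊il/m⌋`, and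
if `i ≢ t (mod m)` then `⌊(a+il)/m⌋ = ⌊(a−1+il)/m⌋`. -/
theorem stmt_0 (a l m : ℤ) (hm : 1 ≤ m) (hcop : Int.gcd l m = 1) :
    (∃! t : ℤ, 0 ≤ t ∧ t ≤ m - 1 ∧ m ∣ a + t * l) ∧
    (∀ t : ℤ, 0 ≤ t → t ≤ m - 1 → m ∣ a + t * l → ∀ i : ℤ,
      (i ≡ t [ZMOD m] →
        ⌊((a + i * l : ℤ) : ℚ) / (m : ℚ)⌋ = ⌊((a - 1 + i * l : ℤ) : ℚ) / (m : ℚ)⌋ + 1 ∧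
        ⌊((a + i * l : ℤ) : ℚ) / (m : ℚ)⌋ = ⌈((a : ℤ) : ℚ) / (m : ℚ)⌉ +
          ⌊((i * l : ℤ) : ℚ) / (m : ℚ)⌋) ∧
      (¬ i ≡ t [ZMOD m] →
        ⌊((a + i * l : ℤ) : ℚ) / (m : ℚ)⌋ = ⌊((a - 1 + i * l : ℤ) : ℚ) / (m : ℚ)⌋)) := by
  have hm0 : 0 < m := hm
  have hcop' : IsCoprime l m := Int.isCoprime_iff_gcd_eq_one.mpr hcop
  obtain ⟨u, v, huv⟩ := id hcop'
  have uniq_aux : ∀ t t' : ℤ, m ∣ a + t * l → m ∣ a + t' * l → m ∣ t' - t := by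
    rintro t t' ⟨d, hd⟩ ⟨c, hc⟩
    have hml : m ∣ (t' - t) * l := ⟨c - d, by linear_combination hc - hd⟩
    exact IsCoprime.dvd_of_dvd_mul_right (IsCoprime.symm hcop') hml
  constructor
  · set q := (-a * u) / m with hq
    set t0 := (-a * u) % m with ht0
    have hdvd0 : m ∣ a + t0 * l := by
      refine ⟨a * v - q * l, ?_⟩
      have hmod : t0 = -a * u - m * q := by rw [ht0, hq, Int.emod_def]
      rw [hmod]
      linear_combination (-a) * huv
    refine ⟨t0, ⟨Int.emod_nonneg _ hm0.ne', by
      have := Int.emod_lt_of_pos (-a * u) hm0; omega, hdvd0⟩, ?_⟩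
    rintro t' ⟨h0, h1, hd⟩
    have hdv := uniq_aux t0 t' hdvd0 hd
    have hb0 : 0 ≤ t0 := Int.emod_nonneg _ hm0.ne'
    have hb1 : t0 < m := Int.emod_lt_of_pos _ hm0
    have : t' - t0 = 0 := Int.eq_zero_of_abs_lt_dvd hdv (by rw [abs_lt]; omega)
    omega
  · intro t ht0 ht1 hdvd i
    have hdvd' : ∀ j : ℤ, j ≡ t [ZMOD m] → m ∣ a + j * l := by
      intro j hj
      have : m ∣ j - t := Int.ModEq.dvd hj.symm
      obtain ⟨c, hc⟩ := this
      obtain ⟨d, hd⟩ := hdvd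
      exact ⟨d + c * l, by
        have : j = t + m * c := by omega
        rw [this]; ring_nf; nlinarith [hd]⟩
    constructor
    · intro hi
      have hd : m ∣ a + i * l := hdvd' i hi
      have f1 : ⌊((a + i * l : ℤ) : ℚ) / (m : ℚ)⌋ = (a + i * l) / m := myfloor _ _ hm0
      have f2 : ⌊((a - 1 + i * l : ℤ) : ℚ) / (m : ℚ)⌋ = (a - 1 + i * l) / m := myfloor _ _ hm0
      have f3 : ⌊((i * l : ℤ) : ℚ) / (m : ℚ)⌋ = (i * l) / m := myfloor _ _ hm0
      have f4 : ⌈((a : ℤ) : ℚ) / (m : ℚ)⌉ = -((-a) / m) := myceil _ _ hm0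
      have e1 := div_sub_one_dvd m (a + i * l) hm0 hd
      have e2 := div_split m a (i * l) hm0 hd
      constructor
      · rw [f1, f2]; rw [show a - 1 + i * l = a + i * l - 1 by ring]; exact e1
      · rw [f1, f3, f4]; exact e2
    · intro hi
      have hnd : ¬ m ∣ a + i * l := by
        intro hd
        apply hi
        -- m ∣ (i - t) * l follows from m ∣ a + i*l and m ∣ a + t*l
        obtain ⟨c, hc⟩ := hd
        obtain ⟨d, hd'⟩ := hdvd
        have hml : m ∣ (i - t) * l := ⟨c - d, by linear_combination hc - hd'⟩
        have : m ∣ i - t := IsCoprime.dvd_of_dvd_mul_right (IsCoprime.symm hcop') hml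
        exact Int.ModEq.symm (Int.modEq_iff_dvd.mpr this)
      have f1 : ⌊((a + i * l : ℤ) : ℚ) / (m : ℚ)⌋ = (a + i * l) / m := myfloor _ _ hm0
      have f2 : ⌊((a - 1 + i * l : ℤ) : ℚ) / (m : ℚ)⌋ = (a - 1 + i * l) / m := myfloor _ _ hm0
      rw [f1, f2, show a - 1 + i * l = a + i * l - 1 by ring]
      exact div_sub_one_not_dvd m (a + i * l) hm0 hnd
end

section
/- Let m ≥ 2 and 2 ≤ n ≤ r be integers, let λ_1,…,λ_r ∈ ℤ satisfy gcd(λ_k, m) = 1 for 1 ≤ k ≤ n, and let α = (α_1,…,α_n) ∈ ℤⁿ. For each 1 ≤ i ≤ n let t_i be the unique integer in {0,…,m−1} with α_i + t_iλ_i ≡ 0 (mod m). Then the following are equivalent: (I) for every 1 ≤ i ≤ n one has Σ_{k=1}^{n} ⌊(α_k+t_iλ_k)/m⌋ + Σ_{k=n+1}^{r} ⌊t_iλ_k/m⌋ ≥ 0, and for every pair 1 ≤ i, j ≤ n with i ≠ j one has Σ_{1≤k≤n, k≠j} ⌊(α_k+t_iλ_k)/m⌋ + ⌊(α_j−1+t_iλ_j)/m⌋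 + Σ_{k=n+1}^{r} ⌊t_iλ_k/m⌋ < 0; (II) there exists a (necessarily unique) t ∈ {0,…,m−1} such that α_k + tλ_k ≡ 0 (mod m) for every 1 ≤ k ≤ n and Σ_{k=1}^{n} ⌈α_k/m⌉ + Σ_{k=1}^{r} ⌊tλ_k/m⌋ = 0. -/
open Finset

lemma floorq (m x : ℤ) (hm : 0 < m) : ⌊((x : ℚ)) / (m : ℚ)⌋ = x / m := by
  have h : m = (m.toNat : ℤ) := (Int.toNat_of_nonneg hm.le).symm
  rw [h]
  push_cast
  exact Rat.floor_intCast_div_natCast x m.toNat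

lemma ceilq (m x : ℤ) (hm : 0 < m) : ⌈((x : ℚ)) / (m : ℚ)⌉ = -((-x) / m) := by
  rw [← floorq m (-x) hm]
  push_cast
  rw [neg_div, Int.floor_neg, neg_neg]

-- (x-1)/m = x/m - 1 when m ∣ x
lemma edivL1 (m x : ℤ) (hm : 0 < m) (h : m ∣ x) : (x - 1) / m = x / m - 1 := by
  obtain ⟨q, rfl⟩ := h
  have h1 : m * q - 1 = (m - 1) + m * (q - 1) := by ring
  rw [h1, Int.add_mul_ediv_left _ _ hm.ne', Int.mul_ediv_cancel_left _ hm.ne',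
    Int.ediv_eq_zero_of_lt (by omega) (by omega)]
  ring

lemma edivL2 (m x : ℤ) (hm : 0 < m) (h : ¬ m ∣ x) : (x - 1) / m = x / m := by
  have hx : x = m * (x / m) + x % m := (Int.mul_ediv_add_emod x m).symm
  have h0 : 0 ≤ x % m := Int.emod_nonneg x hm.ne'
  have h1 : x % m < m := Int.emod_lt_of_pos x hm
  have h2 : x % m ≠ 0 := fun hc => h (Int.dvd_of_emod_eq_zero hc)
  have h3 : x - 1 = (x % m - 1) + m * (x / m) := by omega
  have h4 : x = (x % m) + m * (x / m) := by omega
  rw [h3, Int.add_mul_ediv_left _ _ hm.ne', Int.ediv_eq_zero_of_lt (by omega) (by omega)]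
  conv_rhs => rw [h4, Int.add_mul_ediv_left _ _ hm.ne',
    Int.ediv_eq_zero_of_lt (by omega) (by omega)]

-- ceil(a/m) + floor(b/m) = (a+b)/m when m ∣ a + b
lemma edivL3 (m a b : ℤ) (hm : 0 < m) (h : m ∣ a + b) :
    -((-a) / m) + b / m = (a + b) / m := by
  have h0 : 0 ≤ b % m := Int.emod_nonneg b hm.ne'
  have h1 : b % m < m := Int.emod_lt_of_pos b hm
  have hb : b = m * (b / m) + b % m := (Int.mul_ediv_add_emod b m).symm
  have hd : m ∣ a + b % m := by
    have : a + b % m = (a + b) - m * (b / m) := by omega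
    rw [this]; exact dvd_sub h ⟨b / m, rfl⟩
  obtain ⟨p, hp⟩ := hd
  have ha : -a = (b % m) + m * (-p) := by rw [mul_neg]; linarith
  have hab : a + b = m * (p + b / m) := by rw [mul_add]; linarith
  rw [ha, Int.add_mul_ediv_left _ _ hm.ne', Int.ediv_eq_zero_of_lt (by omega) (by omega),
    hab, Int.mul_ediv_cancel_left _ hm.ne']
  ring

-- residue uniqueness
lemma resuniq (m u v : ℤ) (hm : 0 < m) (hu : 0 ≤ u) (hu' : u ≤ m - 1)
    (hv : 0 ≤ v) (hv' : v ≤ m - 1) (h : m ∣ u - v) : u = v := by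
  obtain ⟨c, hc⟩ := h
  rcases lt_trichotomy c 0 with h | h | h
  · have h2 : m * c ≤ -m := by nlinarith
    linarith
  · subst h; simp at hc; omega
  · have h2 : m ≤ m * c := by nlinarith
    linarith

-- sum split over Fin r
lemma sumsplit (n r : ℕ) (hnr : n ≤ r) (g : Fin r → ℤ) :
    ∑ k : Fin r, g k = (∑ i : Fin n, g (Fin.castLE hnr i))
      + ∑ k ∈ Finset.univ.filter (fun k : Fin r => n ≤ k.val), g k := by
  rw [← Finset.sum_filter_add_sum_filter_not Finset.univ (fun k : Fin r => (k : ℕ) < n) g]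
  congr 1
  · refine (Finset.sum_bij' (fun (k : Fin r) (hk : k ∈ Finset.univ.filter (fun k : Fin r => (k : ℕ) < n)) => (⟨k.1, by simpa using hk⟩ : Fin n)) (fun (i : Fin n) _ => Fin.castLE hnr i) ?_ ?_ ?_ ?_ ?_) <;> simp [Fin.ext_iff]
  · simp [not_lt]

/-- **Lemma 3.1 (arithmetic form).** Let `m ≥ 2`, `2 ≤ n ≤ r`, `λ : Fin r → ℤ` with
`gcd(λ_k, m) = 1` for the first `n` indices, and `α : Fin n → ℤ`. For each `i` let `t i`
be the unique integer in `{0, …, m−1}` with `α_i + t_i λ_i ≡ 0 (mod m)`. Then condition (I)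
(the displayed inequalities) holds iff there exists a (necessarily unique)
`u ∈ {0, …, m−1}` with `α_k + u λ_k ≡ 0 (mod m)` for all `k ≤ n` and
`Σ_{k=1}^n ⌈α_k/m⌉ + Σ_{k=1}^r ⌊u λ_k/m⌋ = 0`. -/
theorem stmt_1 (m : ℤ) (hm : 2 ≤ m) (n r : ℕ) (hn : 2 ≤ n) (hnr : n ≤ r)
    (lam : Fin r → ℤ) (hcop : ∀ k : Fin r, k.val < n → Int.gcd (lam k) m = 1)
    (a : Fin n → ℤ) (t : Fin n → ℤ)
    (ht : ∀ i : Fin n, 0 ≤ t i ∧ t i ≤ m - 1 ∧ m ∣ a i + t i * lam (Fin.castLE hnr i)) :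
    ((∀ i : Fin n,
        0 ≤ (∑ k : Fin n, ⌊((a k + t i * lam (Fin.castLE hnr k) : ℤ) : ℚ) / (m : ℚ)⌋)
          + ∑ k ∈ Finset.univ.filter (fun k : Fin r => n ≤ k.val),
              ⌊((t i * lam k : ℤ) : ℚ) / (m : ℚ)⌋) ∧
      (∀ i j : Fin n, i ≠ j →
        (∑ k ∈ Finset.univ.erase j,
              ⌊((a k + t i * lam (Fin.castLE hnr k) : ℤ) : ℚ) / (m : ℚ)⌋)
          + ⌊((a j - 1 + t i * lam (Fin.castLE hnr j) : ℤ) : ℚ) / (m : ℚ)⌋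
          + (∑ k ∈ Finset.univ.filter (fun k : Fin r => n ≤ k.val),
              ⌊((t i * lam k : ℤ) : ℚ) / (m : ℚ)⌋) < 0))
    ↔ (∃! u : ℤ, 0 ≤ u ∧ u ≤ m - 1 ∧
        (∀ k : Fin n, m ∣ a k + u * lam (Fin.castLE hnr k)) ∧
        (∑ k : Fin n, ⌈((a k : ℤ) : ℚ) / (m : ℚ)⌉)
          + (∑ k : Fin r, ⌊((u * lam k : ℤ) : ℚ) / (m : ℚ)⌋) = 0) := by
  have hm0 : (0 : ℤ) < m := by omega
  simp only [show ∀ x : ℤ, ⌊((x : ℚ)) / (m : ℚ)⌋ = x / m from fun x => floorq m x hm0,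
    show ∀ x : ℤ, ⌈((x : ℚ)) / (m : ℚ)⌉ = -((-x) / m) from fun x => ceilq m x hm0]
  -- coprimality helper
  have hco : ∀ k : Fin n, IsCoprime m (lam (Fin.castLE hnr k)) := by
    intro k
    exact (Int.isCoprime_iff_gcd_eq_one.mpr (hcop _ (by simp [k.2]))).symm
  have hdvd_tu : ∀ (i : Fin n) (v : ℤ), m ∣ a i + v * lam (Fin.castLE hnr i) → m ∣ t i - v := by
    intro i v hv
    have h1 : m ∣ (t i - v) * lam (Fin.castLE hnr i) := by
      have := dvd_sub (ht i).2.2 hv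
      have he : a i + t i * lam (Fin.castLE hnr i) - (a i + v * lam (Fin.castLE hnr i))
          = (t i - v) * lam (Fin.castLE hnr i) := by ring
      rwa [he] at this
    exact (hco i).dvd_of_dvd_mul_right h1
  -- the master sum identity
  have hSum : ∀ v : ℤ, (∀ k : Fin n, m ∣ a k + v * lam (Fin.castLE hnr k)) →
      (∑ k : Fin n, -((-a k) / m)) + (∑ k : Fin r, v * lam k / m)
        = (∑ k : Fin n, (a k + v * lam (Fin.castLE hnr k)) / m)
          + ∑ k ∈ Finset.univ.filter (fun k : Fin r => n ≤ k.val), v * lam k / m := by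
    intro v hv
    rw [sumsplit n r hnr (fun k => v * lam k / m), ← add_assoc]
    congr 1
    rw [← Finset.sum_add_distrib]
    exact Finset.sum_congr rfl fun k _ => edivL3 m (a k) (v * lam (Fin.castLE hnr k)) hm0 (hv k)
  constructor
  · rintro ⟨H1, H2⟩
    -- every t i satisfies all congruences and S i = 0
    have key : ∀ i j : Fin n, i ≠ j → m ∣ a j + t i * lam (Fin.castLE hnr j) := by
      intro i j hij
      by_contra hnd
      have h2 := H2 i j hij
      have he : a j - 1 + t i * lam (Fin.castLE hnr j)
          = (a j + t i * lam (Fin.castLE hnr j)) - 1 := by ring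
      rw [he, edivL2 m _ hm0 hnd] at h2
      have hes := Finset.add_sum_erase Finset.univ
        (fun k => (a k + t i * lam (Fin.castLE hnr k)) / m) (Finset.mem_univ j)
      have h1 := H1 i
      linarith
    have keyall : ∀ i j : Fin n, m ∣ a j + t i * lam (Fin.castLE hnr j) := by
      intro i j
      by_cases hij : i = j
      · subst hij; exact (ht i).2.2
      · exact key i j hij
    have hS0 : ∀ i : Fin n, (∑ k : Fin n, (a k + t i * lam (Fin.castLE hnr k)) / m)
        + (∑ k ∈ Finset.univ.filter (fun k : Fin r => n ≤ k.val), t i * lam k / m) = 0 := by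
      intro i
      obtain ⟨j, hij⟩ : ∃ j : Fin n, i ≠ j := by
        by_cases h0 : i = ⟨0, by omega⟩
        · exact ⟨⟨1, by omega⟩, by simp [h0, Fin.ext_iff]⟩
        · exact ⟨⟨0, by omega⟩, fun hc => h0 hc⟩
      have h2 := H2 i j hij
      have he : a j - 1 + t i * lam (Fin.castLE hnr j)
          = (a j + t i * lam (Fin.castLE hnr j)) - 1 := by ring
      rw [he, edivL1 m _ hm0 (keyall i j)] at h2
      have hes := Finset.add_sum_erase Finset.univ
        (fun k => (a k + t i * lam (Fin.castLE hnr k)) / m) (Finset.mem_univ j)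
      have h1 := H1 i
      linarith
    refine ⟨t ⟨0, by omega⟩, ⟨(ht _).1, (ht _).2.1, keyall _, ?_⟩, ?_⟩
    · rw [hSum (t ⟨0, by omega⟩) (keyall ⟨0, by omega⟩)]
      exact hS0 _
    · rintro v ⟨hv0, hv1, hvc, -⟩
      exact (resuniq m (t ⟨0, by omega⟩) v hm0 (ht _).1 (ht _).2.1 hv0 hv1
        (hdvd_tu _ v (hvc _))).symm
  · rintro ⟨u, ⟨hu0, hu1, huc, hus⟩, -⟩
    have htu : ∀ i : Fin n, t i = u :=
      fun i => resuniq m (t i) u hm0 (ht i).1 (ht i).2.1 hu0 hu1 (hdvd_tu i u (huc i))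
    rw [hSum u huc] at hus
    constructor
    · intro i
      rw [htu i, hus]
    · intro i j hij
      rw [htu i]
      have he : a j - 1 + u * lam (Fin.castLE hnr j)
          = (a j + u * lam (Fin.castLE hnr j)) - 1 := by ring
      rw [he, edivL1 m _ hm0 (huc j)]
      have hes := Finset.add_sum_erase Finset.univ
        (fun k => (a k + u * lam (Fin.castLE hnr k)) / m) (Finset.mem_univ j)
      linarith
end

section
/- Let m ≥ 2 and 2 ≤ n ≤ r be integers, let λ_1,…,λ_r ∈ ℤ satisfy gcd(λ_k, m) = 1 for 1 ≤ k ≤ n, and let α = (α_1,…,α_n) ∈ ℤⁿ. For each 1 ≤ i ≤ n let t_i be the unique integer in {0,…,m−1} with α_i + t_iλ_i ≡ 0 (mod m). Then the following are equivalent: (I) for every pair 1 ≤ i, j ≤ n with i ≠ j one has Σ_{1≤k≤n, k≠i,j} ⌊(α_k−1+t_iλ_k)/m⌋ + ⌊(α_i+t_iλ_i)/m⌋ + ⌊(α_j+t_iλ_j)/m⌋ + Σ_{k=n+1}^{r} ⌊t_iλ_k/m⌋ ≥ 0, and for every 1 ≤ i ≤ n one has Σ_{1≤k≤n, k≠i}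 ⌊(α_k−1+t_iλ_k)/m⌋ + ⌊(α_i+t_iλ_i)/m⌋ + Σ_{k=n+1}^{r} ⌊t_iλ_k/m⌋ < 0; (II) there exists a (necessarily unique) t ∈ {0,…,m−1} such that α_k + tλ_k ≡ 0 (mod m) for every 1 ≤ k ≤ n and Σ_{k=1}^{n} ⌈α_k/m⌉ + Σ_{k=1}^{r} ⌊tλ_k/m⌋ = n − 2. -/
/-!
Since `m > 0`, every floor of a rational `x / m` is the integer quotient `x / m`, and
`x / m = (x - 1) / m + [m ∣ x]`. Put
`G s = ∑_{k ≤ n} ⌊(α_k - 1 + s λ_k)/m⌋ + ∑_{k > n} ⌊s λ_k/m⌋` (`floorSum` below).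
As `m ∣ α_i + t_i λ_i`, the sums in (I) equal `G t_i + 1` and `G t_i + 1 + [m ∣ α_j + t_i λ_j]`,
and by coprimality `m ∣ α_j + t_i λ_j` holds exactly when `t_i = t_j`. Hence (I) says that all
`t_i` equal one `u` with `G u = -2`. In (II), `⌈α_k/m⌉ + ⌊u λ_k/m⌋ = ⌊(α_k - 1 + u λ_k)/m⌋ + 1`
because `m ∣ α_k + u λ_k`, so the sum in (II) is `G u + n` and (II) says the same.
-/

open Finset

lemma Int.floor_intCast_div_intCast_of_pos {m : ℤ} (hm : 0 < m) (x : ℤ) :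
    ⌊(x : ℚ) / (m : ℚ)⌋ = x / m := by
  lift m to ℕ using hm.le
  exact_mod_cast Rat.floor_intCast_div_natCast x m

lemma Int.ceil_intCast_div_intCast_of_pos {m : ℤ} (hm : 0 < m) (x : ℤ) :
    ⌈(x : ℚ) / (m : ℚ)⌉ = -(-x / m) := by
  lift m to ℕ using hm.le
  exact_mod_cast Rat.ceil_intCast_div_natCast x m

lemma Int.ediv_eq_sub_one_ediv_add_ite {m : ℤ} (hm : 0 < m) (x : ℤ) :
    x / m = (x - 1) / m + if m ∣ x then 1 else 0 := by
  have hx := Int.emod_add_mul_ediv x m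
  have hr0 := Int.emod_nonneg x hm.ne'
  have hrm := Int.emod_lt_of_pos x hm
  split_ifs with h
  · have hr : x % m = 0 := Int.emod_eq_zero_of_dvd h
    have : (x - 1) / m = x / m - 1 :=
      ((Int.ediv_emod_unique (r := m - 1) hm).2
        ⟨by linear_combination hx - hr, by omega, by omega⟩).1
    omega
  · have hr : x % m ≠ 0 := fun h' => h (Int.dvd_of_emod_eq_zero h')
    have : (x - 1) / m = x / m :=
      ((Int.ediv_emod_unique (r := x % m - 1) hm).2
        ⟨by linear_combination hx, by omega, by omega⟩).1
    omega

lemma Int.add_ediv_eq_sub_one_add_ediv_add_ite {m : ℤ} (hm : 0 < m) (x y : ℤ) :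
    (x + y) / m = (x - 1 + y) / m + if m ∣ x + y then 1 else 0 := by
  rw [sub_add_eq_add_sub]
  exact Int.ediv_eq_sub_one_ediv_add_ite hm _

lemma Int.neg_neg_ediv_add_ediv_of_dvd {m x y : ℤ} (h : m ∣ x + y) :
    -(-x / m) + y / m = (x + y) / m := by
  have := Int.add_ediv_of_dvd_left (b := -x) h
  rw [add_neg_cancel_comm] at this
  linarith

lemma Int.eq_of_dvd_add_mul_of_dvd_add_mul {m c a x y : ℤ} (hc : IsCoprime c m)
    (hx : 0 ≤ x) (hxm : x ≤ m - 1) (hy : 0 ≤ y) (hym : y ≤ m - 1)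
    (hxa : m ∣ a + x * c) (hya : m ∣ a + y * c) : x = y := by
  have hmul : m ∣ (x - y) * c := by
    have := dvd_sub hxa hya
    rwa [show a + x * c - (a + y * c) = (x - y) * c by ring] at this
  have := Int.eq_zero_of_abs_lt_dvd (hc.symm.dvd_of_dvd_mul_right hmul) (by rw [abs_lt]; omega)
  omega

lemma Fin.sum_univ_eq_sum_castLE_add_sum_filter_le {M : Type*} [AddCommMonoid M] {n r : ℕ}
    (hnr : n ≤ r) (f : Fin r → M) :
    ∑ k, f k = ∑ k : Fin n, f (Fin.castLE hnr k) +
      ∑ k ∈ univ.filter (fun k : Fin r => n ≤ k.val), f k := by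
  rw [← sum_filter_add_sum_filter_not univ (fun k : Fin r => k.val < n)]
  congr 1
  · symm
    refine sum_nbij (Fin.castLE hnr) (by simp) (Fin.castLE_injective hnr).injOn ?_ (fun _ _ => rfl)
    intro k hk
    exact ⟨⟨k, (mem_filter.1 hk).2⟩, mem_coe.2 (mem_univ _), rfl⟩
  · simp only [not_lt]

section

variable {m : ℤ} {n r : ℕ} (hnr : n ≤ r) (lam : Fin r → ℤ) (a : Fin n → ℤ)

variable (m) in
def floorSum (s : ℤ) : ℤ :=
  ∑ k : Fin n, (a k - 1 + s * lam (Fin.castLE hnr k)) / m +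
    ∑ k ∈ univ.filter (fun k : Fin r => n ≤ k.val), s * lam k / m

variable {hnr lam a}

lemma sum_erase_add_eq_floorSum_add_one (hm : 0 < m) {s : ℤ} {i : Fin n}
    (hi : m ∣ a i + s * lam (Fin.castLE hnr i)) :
    ∑ k ∈ univ.erase i, (a k - 1 + s * lam (Fin.castLE hnr k)) / m
        + (a i + s * lam (Fin.castLE hnr i)) / m
        + ∑ k ∈ univ.filter (fun k : Fin r => n ≤ k.val), s * lam k / m
      = floorSum m hnr lam a s + 1 := by
  rw [floorSum, ← sum_erase_add univ _ (mem_univ i), Int.add_ediv_eq_sub_one_add_ediv_add_ite hm,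
    if_pos hi]
  ring

lemma sum_erase_erase_add_eq_floorSum_add_one_add_ite (hm : 0 < m) {s : ℤ} {i j : Fin n}
    (hij : i ≠ j) (hi : m ∣ a i + s * lam (Fin.castLE hnr i)) :
    ∑ k ∈ (univ.erase i).erase j, (a k - 1 + s * lam (Fin.castLE hnr k)) / m
        + (a i + s * lam (Fin.castLE hnr i)) / m + (a j + s * lam (Fin.castLE hnr j)) / m
        + ∑ k ∈ univ.filter (fun k : Fin r => n ≤ k.val), s * lam k / m
      = floorSum m hnr lam a s + 1 + if m ∣ a j + s * lam (Fin.castLE hnr j) then 1 else 0 := by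
  rw [← sum_erase_add_eq_floorSum_add_one hm hi,
    ← sum_erase_add _ _ (mem_erase.2 ⟨hij.symm, mem_univ j⟩),
    Int.add_ediv_eq_sub_one_add_ediv_add_ite hm (a j)]
  ring

lemma sum_neg_neg_ediv_add_sum_ediv (hm : 0 < m) {u : ℤ}
    (hu : ∀ k, m ∣ a k + u * lam (Fin.castLE hnr k)) :
    ∑ k, -(-a k / m) + ∑ k, u * lam k / m = floorSum m hnr lam a u + n := by
  have hterm (k : Fin n) : -(-a k / m) + u * lam (Fin.castLE hnr k) / m
      = (a k - 1 + u * lam (Fin.castLE hnr k)) / m + 1 := by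
    rw [Int.neg_neg_ediv_add_ediv_of_dvd (hu k), Int.add_ediv_eq_sub_one_add_ediv_add_ite hm,
      if_pos (hu k)]
  rw [Fin.sum_univ_eq_sum_castLE_add_sum_filter_le hnr, ← add_assoc, ← sum_add_distrib,
    sum_congr rfl fun k _ => hterm k, sum_add_distrib, floorSum]
  simp only [sum_const, card_univ, Fintype.card_fin, Int.nsmul_eq_mul, mul_one]
  ring

variable {t : Fin n → ℤ}
  (hcop : ∀ k : Fin r, k.val < n → Int.gcd (lam k) m = 1)
  (ht : ∀ i : Fin n, 0 ≤ t i ∧ t i ≤ m - 1 ∧ m ∣ a i + t i * lam (Fin.castLE hnr i))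
include hcop ht

lemma dvd_add_mul_iff_eq {u : ℤ} (hu0 : 0 ≤ u) (hu1 : u ≤ m - 1) (j : Fin n) :
    m ∣ a j + u * lam (Fin.castLE hnr j) ↔ u = t j := by
  refine ⟨fun hu => ?_, fun hu => hu ▸ (ht j).2.2⟩
  exact Int.eq_of_dvd_add_mul_of_dvd_add_mul (Int.isCoprime_iff_gcd_eq_one.2 (hcop _ j.isLt))
    hu0 hu1 (ht j).1 (ht j).2.1 hu (ht j).2.2

lemma condI_iff_exists_floorSum_eq_neg_two (hm : 0 < m) (hn : 2 ≤ n) :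
    ((∀ i j : Fin n, i ≠ j →
        0 ≤ ∑ k ∈ (univ.erase i).erase j, (a k - 1 + t i * lam (Fin.castLE hnr k)) / m
          + (a i + t i * lam (Fin.castLE hnr i)) / m + (a j + t i * lam (Fin.castLE hnr j)) / m
          + ∑ k ∈ univ.filter (fun k : Fin r => n ≤ k.val), t i * lam k / m) ∧
      ∀ i : Fin n,
        ∑ k ∈ univ.erase i, (a k - 1 + t i * lam (Fin.castLE hnr k)) / m
          + (a i + t i * lam (Fin.castLE hnr i)) / m
          + ∑ k ∈ univ.filter (fun k : Fin r => n ≤ k.val), t i * lam k / m < 0) ↔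
    ∃ u, (∀ i, t i = u) ∧ floorSum m hnr lam a u = -2 := by
  constructor
  · rintro ⟨hpair, hsingle⟩
    have hjump (i j : Fin n) (hij : i ≠ j) : t i = t j ∧ floorSum m hnr lam a (t i) = -2 := by
      have hij' := hpair i j hij
      have hi := hsingle i
      rw [sum_erase_erase_add_eq_floorSum_add_one_add_ite hm hij (ht i).2.2] at hij'
      rw [sum_erase_add_eq_floorSum_add_one hm (ht i).2.2] at hi
      split_ifs at hij' with hdvd
      · exact ⟨(dvd_add_mul_iff_eq hcop ht (ht i).1 (ht i).2.1 j).1 hdvd, by omega⟩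
      · omega
    have := Fin.nontrivial_iff_two_le.2 hn
    obtain ⟨i, j, hij⟩ := exists_pair_ne (Fin n)
    refine ⟨t i, fun k => ?_, (hjump i j hij).2⟩
    rcases eq_or_ne k i with rfl | hki
    · rfl
    · exact (hjump k i hki).1
  · rintro ⟨u, htu, hu⟩
    refine ⟨fun i j hij => ?_, fun i => ?_⟩
    · rw [sum_erase_erase_add_eq_floorSum_add_one_add_ite hm hij (ht i).2.2,
        if_pos (htu i ▸ htu j ▸ (ht j).2.2), htu, hu]
      norm_num
    · rw [sum_erase_add_eq_floorSum_add_one hm (ht i).2.2, htu, hu]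
      norm_num

lemma condII_iff_exists_floorSum_eq_neg_two (hm : 0 < m) (hn : 1 ≤ n) :
    (∃! u : ℤ, 0 ≤ u ∧ u ≤ m - 1 ∧ (∀ k : Fin n, m ∣ a k + u * lam (Fin.castLE hnr k)) ∧
        ∑ k, -(-a k / m) + ∑ k, u * lam k / m = n - 2) ↔
    ∃ u, (∀ i, t i = u) ∧ floorSum m hnr lam a u = -2 := by
  constructor
  · rintro ⟨u, ⟨hu0, hu1, hdvd, hsum⟩, -⟩
    rw [sum_neg_neg_ediv_add_sum_ediv hm hdvd] at hsum
    exact ⟨u, fun i => ((dvd_add_mul_iff_eq hcop ht hu0 hu1 i).1 (hdvd i)).symm, by omega⟩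
  · rintro ⟨u, htu, hu⟩
    have hdvd (k : Fin n) : m ∣ a k + u * lam (Fin.castLE hnr k) := htu k ▸ (ht k).2.2
    let i₀ : Fin n := ⟨0, hn⟩
    refine ⟨u, ⟨htu i₀ ▸ (ht i₀).1, htu i₀ ▸ (ht i₀).2.1, hdvd, ?_⟩, ?_⟩
    · rw [sum_neg_neg_ediv_add_sum_ediv hm hdvd, hu]
      ring
    · rintro v ⟨hv0, hv1, hvdvd, -⟩
      rw [← htu i₀]
      exact (dvd_add_mul_iff_eq hcop ht hv0 hv1 i₀).1 (hvdvd i₀)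

end

/-- **Lemma 3.2 (arithmetic form).** Let `m ≥ 2`, `2 ≤ n ≤ r`, `λ : Fin r → ℤ` with
`gcd(λ_k, m) = 1` for the first `n` indices, and `α : Fin n → ℤ`. For each `i` let `t i`
be the unique integer in `{0, …, m−1}` with `α_i + t_i λ_i ≡ 0 (mod m)`. Then condition (I)
(the displayed inequalities) holds iff there exists a (necessarily unique)
`u ∈ {0, …, m−1}` with `α_k + u λ_k ≡ 0 (mod m)` for all `k ≤ n` and
`Σ_{k=1}^n ⌈α_k/m⌉ + Σ_{k=1}^r ⌊u λ_k/m⌋ = n − 2`. -/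
theorem stmt_2 (m : ℤ) (hm : 2 ≤ m) (n r : ℕ) (hn : 2 ≤ n) (hnr : n ≤ r)
    (lam : Fin r → ℤ) (hcop : ∀ k : Fin r, k.val < n → Int.gcd (lam k) m = 1)
    (a : Fin n → ℤ) (t : Fin n → ℤ)
    (ht : ∀ i : Fin n, 0 ≤ t i ∧ t i ≤ m - 1 ∧ m ∣ a i + t i * lam (Fin.castLE hnr i)) :
    ((∀ i j : Fin n, i ≠ j →
        0 ≤ (∑ k ∈ (Finset.univ.erase i).erase j,
              ⌊((a k - 1 + t i * lam (Fin.castLE hnr k) : ℤ) : ℚ) / (m : ℚ)⌋)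
          + ⌊((a i + t i * lam (Fin.castLE hnr i) : ℤ) : ℚ) / (m : ℚ)⌋
          + ⌊((a j + t i * lam (Fin.castLE hnr j) : ℤ) : ℚ) / (m : ℚ)⌋
          + ∑ k ∈ Finset.univ.filter (fun k : Fin r => n ≤ k.val),
              ⌊((t i * lam k : ℤ) : ℚ) / (m : ℚ)⌋) ∧
      (∀ i : Fin n,
        (∑ k ∈ Finset.univ.erase i,
              ⌊((a k - 1 + t i * lam (Fin.castLE hnr k) : ℤ) : ℚ) / (m : ℚ)⌋)
          + ⌊((a i + t i * lam (Fin.castLE hnr i) : ℤ) : ℚ) / (m : ℚ)⌋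
          + (∑ k ∈ Finset.univ.filter (fun k : Fin r => n ≤ k.val),
              ⌊((t i * lam k : ℤ) : ℚ) / (m : ℚ)⌋) < 0))
    ↔ (∃! u : ℤ, 0 ≤ u ∧ u ≤ m - 1 ∧
        (∀ k : Fin n, m ∣ a k + u * lam (Fin.castLE hnr k)) ∧
        (∑ k : Fin n, ⌈((a k : ℤ) : ℚ) / (m : ℚ)⌉)
          + (∑ k : Fin r, ⌊((u * lam k : ℤ) : ℚ) / (m : ℚ)⌋) = (n : ℤ) - 2) := by
  have hm₀ : 0 < m := by omega
  simp only [Int.floor_intCast_div_intCast_of_pos hm₀, Int.ceil_intCast_div_intCast_of_pos hm₀]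
  rw [condI_iff_exists_floorSum_eq_neg_two hcop ht hm₀ hn,
    condII_iff_exists_floorSum_eq_neg_two hcop ht hm₀ (by omega)]
end

section
/- Let m ≥ 2 and 2 ≤ n ≤ r be integers, and let λ_1,…,λ_r ∈ ℤ satisfy Σ_{k=1}^{r} λ_k = 0 and gcd(λ_k, m) = 1 for 1 ≤ k ≤ n. For 1 ≤ i ≤ m−1 set t_k(i) := (iλ_k) mod m and β(i) := Σ_{k=1}^{r} ⌈iλ_k/m⌉ − 1. Then the set S := {α ∈ ℤⁿ : there exists t ∈ {0,…,m−1} with α_k + tλ_k ≡ 0 (mod m) for every 1 ≤ k ≤ n and Σ_{k=1}^{n} ⌈α_k/m⌉ + Σ_{k=1}^{r} ⌊tλ_k/m⌋ = 0} equals the union of {(mj_1+t_1(i), …, mj_n+t_n(i)) : 1 ≤ i ≤ m−1, j_1,…,j_n ∈ ℤ, j_1+⋯+j_n = β(i)+1−n} and {(mj_1, …, mj_n) : j_1,…,j_n ∈ ℤ, j_1+⋯+j_n = 0}. -/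
open Finset

lemma ceilA (m a : ℤ) (hm : 0 < m) (h : m ∣ a) :
    ⌈((a : ℤ) : ℚ) / (m : ℚ)⌉ = a / m := by
  obtain ⟨c, rfl⟩ := h
  have hm' : (m : ℚ) ≠ 0 := by exact_mod_cast hm.ne'
  rw [Int.mul_ediv_cancel_left _ hm.ne']
  push_cast
  rw [mul_comm, mul_div_assoc, div_self hm', mul_one, Int.ceil_intCast]

lemma ceilB (m j s : ℤ) (hm : 0 < m) (h0 : 0 < s) (h1 : s < m) :
    ⌈((m * j + s : ℤ) : ℚ) / (m : ℚ)⌉ = j + 1 := by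
  have hm' : (m : ℚ) ≠ 0 := by exact_mod_cast hm.ne'
  have hmq : (0:ℚ) < m := by exact_mod_cast hm
  push_cast
  rw [add_div, mul_comm, mul_div_assoc, div_self hm', mul_one, add_comm,
    Int.ceil_add_intCast]
  have : ⌈(s:ℚ)/(m:ℚ)⌉ = 1 := by
    rw [Int.ceil_eq_iff]
    have hs : (0:ℚ) < s := by exact_mod_cast h0
    have hsm : (s:ℚ) ≤ m := by exact_mod_cast h1.le
    constructor
    · push_cast
      nlinarith [div_pos hs hmq]
    · push_cast
      rw [div_le_one hmq]
      exact hsm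
  omega

lemma ceilC (m t l : ℤ) (hm : 0 < m) :
    ⌈(((m - t) * l : ℤ) : ℚ) / (m : ℚ)⌉ = l - ⌊((t * l : ℤ) : ℚ) / (m : ℚ)⌋ := by
  have hm' : (m : ℚ) ≠ 0 := by exact_mod_cast hm.ne'
  push_cast
  rw [sub_mul, sub_div, mul_comm (m:ℚ), mul_div_assoc, div_self hm', mul_one,
    sub_eq_add_neg, add_comm, Int.ceil_add_intCast, Int.ceil_neg]
  omega

lemma tpos (m i l : ℤ) (hm : 0 < m) (hi1 : 1 ≤ i) (hi2 : i ≤ m - 1)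
    (hc : Int.gcd l m = 1) : 0 < (i * l) % m := by
  rcases (Int.emod_nonneg (i * l) hm.ne').lt_or_eq with h | h
  · exact h
  · exfalso
    have hdvd : m ∣ i * l := Int.dvd_of_emod_eq_zero h.symm
    have hco : IsCoprime m l := by
      rw [Int.isCoprime_iff_gcd_eq_one, Int.gcd_comm]; exact hc
    have := Int.le_of_dvd (by omega) (hco.dvd_of_dvd_mul_right hdvd)
    omega

/-- **Theorem 3.5 for ρ = 0 (arithmetic form).** With `Σ λ_k = 0` and `gcd(λ_k, m) = 1`
for the first `n` indices, the set `S` of `α ∈ ℤⁿ` admitting `t ∈ {0,…,m−1}` with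
`α_k + tλ_k ≡ 0 (mod m)` for all `k ≤ n` and `Σ⌈α_k/m⌉ + Σ⌊tλ_k/m⌋ = 0` equals the union
of `{(mj_k + t_k(i)) : 1 ≤ i ≤ m−1, Σ j_k = β(i)+1−n}` and `{(mj_k) : Σ j_k = 0}`,
where `t_k(i) = (iλ_k) mod m` and `β(i) = Σ_{k=1}^r ⌈iλ_k/m⌉ − 1`. -/
theorem stmt_3 (m : ℤ) (hm : 2 ≤ m) (n r : ℕ) (hn : 2 ≤ n) (hnr : n ≤ r)
    (lam : Fin r → ℤ) (hsum : ∑ k : Fin r, lam k = 0)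
    (hcop : ∀ k : Fin r, k.val < n → Int.gcd (lam k) m = 1) :
    {a : Fin n → ℤ | ∃ t : ℤ, 0 ≤ t ∧ t ≤ m - 1 ∧
        (∀ k : Fin n, m ∣ a k + t * lam (Fin.castLE hnr k)) ∧
        (∑ k : Fin n, ⌈((a k : ℤ) : ℚ) / (m : ℚ)⌉)
          + (∑ k : Fin r, ⌊((t * lam k : ℤ) : ℚ) / (m : ℚ)⌋) = 0}
    = {a : Fin n → ℤ | ∃ i : ℤ, 1 ≤ i ∧ i ≤ m - 1 ∧ ∃ j : Fin n → ℤ,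
          (∀ k : Fin n, a k = m * j k + (i * lam (Fin.castLE hnr k)) % m) ∧
          (∑ k : Fin n, j k)
            = ((∑ k : Fin r, ⌈((i * lam k : ℤ) : ℚ) / (m : ℚ)⌉) - 1) + 1 - n}
      ∪ {a : Fin n → ℤ | ∃ j : Fin n → ℤ,
          (∀ k : Fin n, a k = m * j k) ∧ (∑ k : Fin n, j k) = 0} := by
  have hm0 : 0 < m := by omega
  ext a
  simp only [Set.mem_setOf_eq, Set.mem_union]
  constructor
  · rintro ⟨t, ht0, ht1, hdvd, hs0⟩
    by_cases htz : t = 0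
    · right
      subst htz
      have hda : ∀ k : Fin n, m ∣ a k := by
        intro k; have h := hdvd k; simpa using h
      refine ⟨fun k => a k / m, fun k => (Int.mul_ediv_cancel' (hda k)).symm, ?_⟩
      have hfl : ∀ k : Fin r, ⌊((0 * lam k : ℤ) : ℚ) / (m : ℚ)⌋ = 0 := by
        intro k; norm_num
      rw [Finset.sum_congr rfl (fun k _ => ceilA m (a k) hm0 (hda k)),
        Finset.sum_congr rfl (fun k _ => hfl k)] at hs0
      simpa using hs0
    · left
      have hd : ∀ k : Fin n, m ∣ a k - ((m - t) * lam (Fin.castLE hnr k)) % m := by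
        intro k
        obtain ⟨c, hc⟩ := hdvd k
        have hq := Int.emod_def ((m - t) * lam (Fin.castLE hnr k)) m
        exact ⟨c - lam (Fin.castLE hnr k) + ((m - t) * lam (Fin.castLE hnr k)) / m,
          by linear_combination hc - hq⟩
      set jf : Fin n → ℤ :=
        fun k => (a k - ((m - t) * lam (Fin.castLE hnr k)) % m) / m with hjf
      have ha : ∀ k : Fin n, a k = m * jf k + ((m - t) * lam (Fin.castLE hnr k)) % m := by
        intro k
        simp only [hjf]
        rw [Int.mul_ediv_cancel' (hd k)]
        ring
      refine ⟨m - t, by omega, by omega, jf, ha, ?_⟩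
      have hsk : ∀ k : Fin n, 0 < ((m - t) * lam (Fin.castLE hnr k)) % m := by
        intro k
        exact tpos m (m - t) _ hm0 (by omega) (by omega)
          (hcop _ (by simpa using k.isLt))
      have hceil : ∀ k : Fin n, ⌈((a k : ℤ) : ℚ) / (m : ℚ)⌉ = jf k + 1 := by
        intro k
        conv_lhs => rw [ha k]
        exact ceilB m (jf k) _ hm0 (hsk k) (Int.emod_lt_of_pos _ hm0)
      have hflr : ∀ k : Fin r, ⌊((t * lam k : ℤ) : ℚ) / (m : ℚ)⌋ =
          lam k - ⌈(((m - t) * lam k : ℤ) : ℚ) / (m : ℚ)⌉ := by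
        intro k
        have := ceilC m t (lam k) hm0
        omega
      rw [Finset.sum_congr rfl (fun k _ => hceil k), Finset.sum_add_distrib,
        Finset.sum_congr rfl (fun k _ => hflr k), Finset.sum_sub_distrib, hsum] at hs0
      simp only [Finset.sum_const, Finset.card_univ, Fintype.card_fin,
        nsmul_eq_mul, mul_one, zero_sub] at hs0
      omega
  · rintro (⟨i, hi1, hi2, j, hj, hjsum⟩ | ⟨j, hj, hjsum⟩)
    · refine ⟨m - i, by omega, by omega, ?_, ?_⟩
      · intro k
        have hq := Int.emod_def (i * lam (Fin.castLE hnr k)) m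
        exact ⟨j k + lam (Fin.castLE hnr k) - (i * lam (Fin.castLE hnr k)) / m,
          by linear_combination hj k + hq⟩
      · have hceil : ∀ k : Fin n, ⌈((a k : ℤ) : ℚ) / (m : ℚ)⌉ = j k + 1 := by
          intro k
          rw [hj k]
          exact ceilB m _ _ hm0
            (tpos m i _ hm0 hi1 hi2 (hcop _ (by simpa using k.isLt)))
            (Int.emod_lt_of_pos _ hm0)
        have hflr : ∀ k : Fin r, ⌊(((m - i) * lam k : ℤ) : ℚ) / (m : ℚ)⌋ =
            lam k - ⌈((i * lam k : ℤ) : ℚ) / (m : ℚ)⌉ := by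
          intro k
          have := ceilC m (m - i) (lam k) hm0
          simp only [sub_sub_cancel] at this
          omega
        rw [Finset.sum_congr rfl (fun k _ => hceil k), Finset.sum_add_distrib,
          Finset.sum_congr rfl (fun k _ => hflr k), Finset.sum_sub_distrib, hsum]
        simp only [Finset.sum_const, Finset.card_univ, Fintype.card_fin,
          nsmul_eq_mul, mul_one, zero_sub]
        omega
    · refine ⟨0, le_refl 0, by omega, fun k => ⟨j k, by rw [hj k]; ring⟩, ?_⟩
      have hceil : ∀ k : Fin n, ⌈((a k : ℤ) : ℚ) / (m : ℚ)⌉ = j k := by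
        intro k
        rw [hj k, ceilA m _ hm0 ⟨j k, rfl⟩, Int.mul_ediv_cancel_left _ hm0.ne']
      have hfl : ∀ k : Fin r, ⌊((0 * lam k : ℤ) : ℚ) / (m : ℚ)⌋ = 0 := by
        intro k; norm_num
      rw [Finset.sum_congr rfl (fun k _ => hceil k),
        Finset.sum_congr rfl (fun k _ => hfl k), hjsum]
      simp
end

section
/- Let m ≥ 2 and 2 ≤ n ≤ r be integers, and let λ_1,…,λ_r ∈ ℤ satisfy Σ_{k=1}^{r} λ_k = 0 and gcd(λ_k, m) = 1 for 1 ≤ k ≤ n. For 1 ≤ i ≤ m−1 set t_k(i) := (iλ_k) mod m and β(i) := Σ_{k=1}^{r} ⌈iλ_k/m⌉ − 1. Then the set S := {α ∈ ℤⁿ : there exists t ∈ {0,…,m−1} with α_k + tλ_k ≡ 0 (mod m) for every 1 ≤ k ≤ n and Σ_{k=1}^{n} ⌈α_k/m⌉ + Σ_{k=1}^{r} ⌊tλ_k/m⌋ = n−2} equals the union of {(mj_1+t_1(i), …, mj_n+t_n(i)) : 1 ≤ i ≤ m−1, j_1,…,j_n ∈ ℤ, j_1+⋯+j_n = β(i)−1}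 and {(mj_1, …, mj_n) : j_1,…,j_n ∈ ℤ, j_1+⋯+j_n = n−2}. -/
open Finset

/-- **Theorem 3.5 for ρ = n − 2 (arithmetic form).** With `Σ λ_k = 0` and `gcd(λ_k, m) = 1`
for the first `n` indices, the set `S` of `α ∈ ℤⁿ` admitting `t ∈ {0,…,m−1}` with
`α_k + tλ_k ≡ 0 (mod m)` for all `k ≤ n` and `Σ⌈α_k/m⌉ + Σ⌊tλ_k/m⌋ = n − 2` equals the union
of `{(mj_k + t_k(i)) : 1 ≤ i ≤ m−1, Σ j_k = β(i)−1}` and `{(mj_k) : Σ j_k = n − 2}`,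
where `t_k(i) = (iλ_k) mod m` and `β(i) = Σ_{k=1}^r ⌈iλ_k/m⌉ − 1`. -/
theorem stmt_4 (m : ℤ) (hm : 2 ≤ m) (n r : ℕ) (hn : 2 ≤ n) (hnr : n ≤ r)
    (lam : Fin r → ℤ) (hsum : ∑ k : Fin r, lam k = 0)
    (hcop : ∀ k : Fin r, k.val < n → Int.gcd (lam k) m = 1) :
    {a : Fin n → ℤ | ∃ t : ℤ, 0 ≤ t ∧ t ≤ m - 1 ∧
        (∀ k : Fin n, m ∣ a k + t * lam (Fin.castLE hnr k)) ∧
        (∑ k : Fin n, ⌈((a k : ℤ) : ℚ) / (m : ℚ)⌉)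
          + (∑ k : Fin r, ⌊((t * lam k : ℤ) : ℚ) / (m : ℚ)⌋) = (n : ℤ) - 2}
    = {a : Fin n → ℤ | ∃ i : ℤ, 1 ≤ i ∧ i ≤ m - 1 ∧ ∃ j : Fin n → ℤ,
          (∀ k : Fin n, a k = m * j k + (i * lam (Fin.castLE hnr k)) % m) ∧
          (∑ k : Fin n, j k)
            = ((∑ k : Fin r, ⌈((i * lam k : ℤ) : ℚ) / (m : ℚ)⌉) - 1) - 1}
      ∪ {a : Fin n → ℤ | ∃ j : Fin n → ℤ,
          (∀ k : Fin n, a k = m * j k) ∧ (∑ k : Fin n, j k) = (n : ℤ) - 2} := by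
  have hm0 : (0 : ℤ) < m := by omega
  have hmQ : (m : ℚ) ≠ 0 := by exact_mod_cast hm0.ne'
  -- ceiling of m*j/m
  have hceil_mul : ∀ j : ℤ, ⌈((m * j : ℤ) : ℚ) / (m : ℚ)⌉ = j := by
    intro j
    push_cast
    rw [mul_comm, mul_div_assoc, div_self hmQ, mul_one, Int.ceil_intCast]
  -- ceiling of (m*j+s)/m with 0 < s < m
  have hceil_add : ∀ j s : ℤ, 0 < s → s < m →
      ⌈((m * j + s : ℤ) : ℚ) / (m : ℚ)⌉ = j + 1 := by
    intro j s hs1 hs2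
    have hsQ : ⌈((s : ℤ) : ℚ) / (m : ℚ)⌉ = 1 := by
      rw [Int.ceil_eq_iff]
      constructor
      · push_cast
        have : (0 : ℚ) < (s : ℚ) / (m : ℚ) := by
          apply div_pos
          · exact_mod_cast hs1
          · exact_mod_cast hm0
        linarith
      · push_cast
        rw [div_le_one (by exact_mod_cast hm0)]
        exact_mod_cast hs2.le
    push_cast
    rw [add_div, mul_comm, mul_div_assoc, div_self hmQ, mul_one, add_comm,
      Int.ceil_add_intCast]
    push_cast at hsQ
    rw [hsQ]
    ring
  -- key: if i + t = m then ⌈iL/m⌉ = L - ⌊tL/m⌋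
  have hceil_key : ∀ i t L : ℤ, i + t = m →
      ⌈((i * L : ℤ) : ℚ) / (m : ℚ)⌉ = L - ⌊((t * L : ℤ) : ℚ) / (m : ℚ)⌋ := by
    intro i t L hit
    have hiQ : (i : ℚ) = (m : ℚ) - (t : ℚ) := by exact_mod_cast eq_sub_of_add_eq hit
    have h1 : ((i * L : ℤ) : ℚ) / (m : ℚ) = -(((t * L : ℤ) : ℚ) / (m : ℚ)) + ((L : ℤ) : ℚ) := by
      push_cast [hiQ]
      field_simp
      ring
    rw [h1, Int.ceil_add_intCast, Int.ceil_neg]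
    ring
  -- m divides x - x % m
  have hmod_dvd : ∀ x : ℤ, m ∣ x - x % m := by
    intro x
    exact ⟨x / m, by rw [Int.emod_def]; ring⟩
  -- positivity of i*λ_k % m for 1 ≤ i ≤ m-1 and k < n
  have hspos : ∀ i : ℤ, 1 ≤ i → i ≤ m - 1 → ∀ k : Fin n,
      0 < (i * lam (Fin.castLE hnr k)) % m ∧ (i * lam (Fin.castLE hnr k)) % m < m := by
    intro i hi1 him k
    have hlt : (i * lam (Fin.castLE hnr k)) % m < m := Int.emod_lt_of_pos _ hm0
    have hge : 0 ≤ (i * lam (Fin.castLE hnr k)) % m := Int.emod_nonneg _ hm0.ne'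
    refine ⟨?_, hlt⟩
    rcases eq_or_lt_of_le hge with h0 | h0
    · exfalso
      have hdvd : m ∣ i * lam (Fin.castLE hnr k) := Int.dvd_of_emod_eq_zero h0.symm
      have hco : IsCoprime (lam (Fin.castLE hnr k)) m :=
        Int.isCoprime_iff_gcd_eq_one.mpr (hcop _ (by simpa using k.isLt))
      have hdi : m ∣ i := (hco.symm).dvd_of_dvd_mul_right hdvd
      have := Int.le_of_dvd (by omega) hdi
      omega
    · exact h0
  ext a
  simp only [Set.mem_setOf_eq, Set.mem_union]
  constructor
  · rintro ⟨t, ht0, htm, hdvd, heq⟩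
    by_cases ht : t = 0
    · right
      subst ht
      refine ⟨fun k => a k / m, fun k => ?_, ?_⟩
      · have hd : m ∣ a k := by simpa using hdvd k
        exact (Int.mul_ediv_cancel' hd).symm
      · have h1 : ∑ k : Fin n, ⌈((a k : ℤ) : ℚ) / (m : ℚ)⌉ = ∑ k : Fin n, a k / m := by
          refine Finset.sum_congr rfl fun k _ => ?_
          have hd : m ∣ a k := by simpa using hdvd k
          conv_lhs => rw [← Int.mul_ediv_cancel' hd]
          exact hceil_mul _
        rw [h1] at heq
        simp only [zero_mul, Int.cast_zero, zero_div, Int.floor_zero,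
          Finset.sum_const_zero, add_zero] at heq
        exact heq
    · left
      have hd : ∀ k : Fin n, m ∣ a k - (m - t) * lam (Fin.castLE hnr k) % m := by
        intro k
        have h1 := hdvd k
        have h2 := hmod_dvd ((m - t) * lam (Fin.castLE hnr k))
        have h4 : m ∣ t * lam (Fin.castLE hnr k) + (m - t) * lam (Fin.castLE hnr k) :=
          ⟨lam (Fin.castLE hnr k), by ring⟩
        have h5 := dvd_sub (dvd_add h1 h2) h4
        have h6 : a k - (m - t) * lam (Fin.castLE hnr k) % m =
            (a k + t * lam (Fin.castLE hnr k)) +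
              ((m - t) * lam (Fin.castLE hnr k) - (m - t) * lam (Fin.castLE hnr k) % m) -
              (t * lam (Fin.castLE hnr k) + (m - t) * lam (Fin.castLE hnr k)) := by ring
        rw [h6]
        exact h5
      have hmt1 : (1 : ℤ) ≤ m - t := by omega
      have hmt2 : m - t ≤ m - 1 := by omega
      have hak : ∀ k : Fin n, a k =
          m * ((a k - (m - t) * lam (Fin.castLE hnr k) % m) / m) +
            (m - t) * lam (Fin.castLE hnr k) % m := by
        intro k
        linarith [Int.mul_ediv_cancel' (hd k)]
      refine ⟨m - t, by omega, by omega,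
        fun k => (a k - (m - t) * lam (Fin.castLE hnr k) % m) / m, fun k => hak k, ?_⟩
      show (∑ k : Fin n, (a k - (m - t) * lam (Fin.castLE hnr k) % m) / m)
          = (∑ k : Fin r, ⌈(((m - t) * lam k : ℤ) : ℚ) / (m : ℚ)⌉) - 1 - 1
      have h1 : ∑ k : Fin n, ⌈((a k : ℤ) : ℚ) / (m : ℚ)⌉ =
          (∑ k : Fin n, (a k - (m - t) * lam (Fin.castLE hnr k) % m) / m) + (n : ℤ) := by
        have e1 : ∀ k : Fin n, ⌈((a k : ℤ) : ℚ) / (m : ℚ)⌉ =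
            (a k - (m - t) * lam (Fin.castLE hnr k) % m) / m + 1 := by
          intro k
          obtain ⟨hs1, hs2⟩ := hspos (m - t) hmt1 hmt2 k
          conv_lhs => rw [hak k]
          exact hceil_add _ _ hs1 hs2
        rw [Finset.sum_congr rfl (fun k _ => e1 k), Finset.sum_add_distrib]
        simp
      have h2 : ∑ k : Fin r, ⌈(((m - t) * lam k : ℤ) : ℚ) / (m : ℚ)⌉ =
          - ∑ k : Fin r, ⌊((t * lam k : ℤ) : ℚ) / (m : ℚ)⌋ := by
        have h3 : ∑ k : Fin r, ⌈(((m - t) * lam k : ℤ) : ℚ) / (m : ℚ)⌉ =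
            ∑ k : Fin r, (lam k - ⌊((t * lam k : ℤ) : ℚ) / (m : ℚ)⌋) :=
          Finset.sum_congr rfl fun k _ => hceil_key (m - t) t (lam k) (by ring)
        rw [h3, Finset.sum_sub_distrib, hsum]
        ring
      rw [h1] at heq
      omega
  · rintro (⟨i, hi1, him, j, hjk, hjsum⟩ | ⟨j, hjk, hjsum⟩)
    · refine ⟨m - i, by omega, by omega, ?_, ?_⟩
      · intro k
        have h6 : a k + (m - i) * lam (Fin.castLE hnr k) =
            m * (j k + lam (Fin.castLE hnr k)) -
              (i * lam (Fin.castLE hnr k) - i * lam (Fin.castLE hnr k) % m) := by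
          rw [hjk k]; ring
        rw [h6]
        exact dvd_sub ⟨_, rfl⟩ (hmod_dvd _)
      · have h1 : ∑ k : Fin n, ⌈((a k : ℤ) : ℚ) / (m : ℚ)⌉ =
            (∑ k : Fin n, j k) + (n : ℤ) := by
          have e1 : ∀ k : Fin n, ⌈((a k : ℤ) : ℚ) / (m : ℚ)⌉ = j k + 1 := by
            intro k
            obtain ⟨hs1, hs2⟩ := hspos i hi1 him k
            rw [hjk k]
            exact hceil_add _ _ hs1 hs2
          rw [Finset.sum_congr rfl (fun k _ => e1 k), Finset.sum_add_distrib]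
          simp
        have h2 : ∑ k : Fin r, ⌊(((m - i) * lam k : ℤ) : ℚ) / (m : ℚ)⌋ =
            - ∑ k : Fin r, ⌈((i * lam k : ℤ) : ℚ) / (m : ℚ)⌉ := by
          have h3 : ∑ k : Fin r, ⌈((i * lam k : ℤ) : ℚ) / (m : ℚ)⌉ =
              ∑ k : Fin r, (lam k - ⌊(((m - i) * lam k : ℤ) : ℚ) / (m : ℚ)⌋) :=
            Finset.sum_congr rfl fun k _ => hceil_key i (m - i) (lam k) (by ring)
          have h4 : ∑ k : Fin r, ⌈((i * lam k : ℤ) : ℚ) / (m : ℚ)⌉ =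
              - ∑ k : Fin r, ⌊(((m - i) * lam k : ℤ) : ℚ) / (m : ℚ)⌋ := by
            rw [h3, Finset.sum_sub_distrib, hsum]; ring
          omega
        rw [h1, h2]
        omega
    · refine ⟨0, le_refl 0, by omega, fun k => by rw [hjk k]; simp, ?_⟩
      have h1 : ∑ k : Fin n, ⌈((a k : ℤ) : ℚ) / (m : ℚ)⌉ = ∑ k : Fin n, j k := by
        refine Finset.sum_congr rfl fun k _ => ?_
        rw [hjk k]
        exact hceil_mul _
      rw [h1, hjsum]
      simp
end

section
/- Let m ≥ 2 and 2 ≤ n ≤ r be integers, λ_1,…,λ_r ∈ ℤ with Σ_{k=1}^{r} λ_k = 0 and gcd(λ_k, m) = 1 for 1 ≤ k ≤ n, and let ρ ∈ {0, n−2}. For 1 ≤ i ≤ m−1 set t_k(i) := (iλ_k) mod m and β(i) := Σ_{k=1}^{r} ⌈iλ_k/m⌉ − 1. Then the set of α ∈ ℤⁿ with all coordinates strictly positive such that there exists t ∈ {0,…,m−1} with α_k + tλ_k ≡ 0 (mod m) for every 1 ≤ k ≤ n and Σ_{k=1}^{n} ⌈α_k/m⌉ + Σ_{k=1}^{r} ⌊tλ_k/m⌋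 = ρ is exactly {(mj_1+t_1(i), …, mj_n+t_n(i)) : 1 ≤ i ≤ m−1, j_1,…,j_n ∈ ℤ_{≥0}, j_1+⋯+j_n = β(i)+1−n+ρ}. -/
open Finset

lemma ceil_helper (m j t : ℤ) (hm : 0 < m) (ht0 : 0 < t) (htm : t < m) :
    ⌈((m * j + t : ℤ) : ℚ) / (m : ℚ)⌉ = j + 1 := by
  have hm' : (m : ℚ) ≠ 0 := by exact_mod_cast hm.ne'
  have h1 : ((m * j + t : ℤ) : ℚ) / (m : ℚ) = (t : ℚ) / m + j := by
    push_cast; field_simp; ring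
  rw [h1, Int.ceil_add_intCast]
  have h2 : ⌈(t : ℚ) / m⌉ = 1 := by
    rw [Int.ceil_eq_iff]
    constructor
    · have : (0:ℚ) < (t:ℚ)/m := by
        apply div_pos
        · exact_mod_cast ht0
        · exact_mod_cast hm
      push_cast; simpa using this
    · push_cast
      rw [div_le_one (by exact_mod_cast hm)]
      exact_mod_cast htm.le
  omega

lemma floor_helper (m i l : ℤ) (hm : 0 < m) :
    ⌊(((m - i) * l : ℤ) : ℚ) / (m : ℚ)⌋ = l - ⌈((i * l : ℤ) : ℚ) / (m : ℚ)⌉ := by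
  have hm' : (m : ℚ) ≠ 0 := by exact_mod_cast hm.ne'
  have h1 : (((m - i) * l : ℤ) : ℚ) / (m : ℚ) = -(((i * l : ℤ) : ℚ) / m) + l := by
    push_cast; field_simp; ring
  rw [h1, Int.floor_add_intCast, Int.floor_neg]; ring

lemma Int.emod_emod_of_dvd_helper (m a b : ℤ) (h : m ∣ a - b) : a % m = b % m :=
  Int.ModEq.symm (Int.modEq_iff_dvd.mpr h)

lemma mod_pos_helper (m i l : ℤ) (hm : 0 < m) (hi1 : 1 ≤ i) (him : i ≤ m - 1)
    (hc : Int.gcd l m = 1) : 0 < (i * l) % m := by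
  have h0 : 0 ≤ (i * l) % m := Int.emod_nonneg _ hm.ne'
  rcases h0.lt_or_eq with h | h
  · exact h
  · exfalso
    have hdvd : m ∣ i * l := Int.dvd_of_emod_eq_zero h.symm
    have hcop : IsCoprime m l := by
      rw [Int.isCoprime_iff_gcd_eq_one, Int.gcd_comm]; exact hc
    have : m ∣ i := hcop.dvd_of_dvd_mul_right hdvd
    have := Int.le_of_dvd (by omega) this
    omega


/-- **Corollary 3.6, first part (arithmetic form).** With `Σ λ_k = 0`, `gcd(λ_k, m) = 1`
for the first `n` indices, and `ρ ∈ {0, n−2}`, the set of `α ∈ ℤⁿ` with all coordinates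
strictly positive admitting `t ∈ {0,…,m−1}` with `α_k + tλ_k ≡ 0 (mod m)` for all `k ≤ n`
and `Σ⌈α_k/m⌉ + Σ⌊tλ_k/m⌋ = ρ` equals
`{(mj_k + t_k(i)) : 1 ≤ i ≤ m−1, j_k ≥ 0, Σ j_k = β(i)+1−n+ρ}`,
where `t_k(i) = (iλ_k) mod m` and `β(i) = Σ_{k=1}^r ⌈iλ_k/m⌉ − 1`. -/
theorem stmt_5 (m : ℤ) (hm : 2 ≤ m) (n r : ℕ) (hn : 2 ≤ n) (hnr : n ≤ r)
    (lam : Fin r → ℤ) (hsum : ∑ k : Fin r, lam k = 0)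
    (hcop : ∀ k : Fin r, k.val < n → Int.gcd (lam k) m = 1)
    (ρ : ℤ) (hρ : ρ = 0 ∨ ρ = (n : ℤ) - 2) :
    {a : Fin n → ℤ | (∀ k : Fin n, 0 < a k) ∧ ∃ t : ℤ, 0 ≤ t ∧ t ≤ m - 1 ∧
        (∀ k : Fin n, m ∣ a k + t * lam (Fin.castLE hnr k)) ∧
        (∑ k : Fin n, ⌈((a k : ℤ) : ℚ) / (m : ℚ)⌉)
          + (∑ k : Fin r, ⌊((t * lam k : ℤ) : ℚ) / (m : ℚ)⌋) = ρ}
    = {a : Fin n → ℤ | ∃ i : ℤ, 1 ≤ i ∧ i ≤ m - 1 ∧ ∃ j : Fin n → ℤ,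
          (∀ k : Fin n, 0 ≤ j k) ∧
          (∀ k : Fin n, a k = m * j k + (i * lam (Fin.castLE hnr k)) % m) ∧
          (∑ k : Fin n, j k)
            = ((∑ k : Fin r, ⌈((i * lam k : ℤ) : ℚ) / (m : ℚ)⌉) - 1) + 1 - n + ρ} := by
  have hm0 : (0:ℤ) < m := by omega
  have hn2 : (2:ℤ) ≤ (n:ℤ) := by exact_mod_cast hn
  have hρn : ρ ≤ (n:ℤ) - 2 := by rcases hρ with h | h <;> omega
  ext a
  simp only [Set.mem_setOf_eq]
  constructor
  · rintro ⟨hpos, t, ht0, htm, hdvd, hS⟩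
    -- t ≠ 0
    have ht1 : 1 ≤ t := by
      rcases ht0.lt_or_eq with h | h
      · omega
      · exfalso
        subst h
        simp only [zero_mul, Int.cast_zero, zero_div, Int.floor_zero,
          Finset.sum_const_zero, add_zero] at hS
        have hge : ∀ k : Fin n, 1 ≤ ⌈((a k : ℤ) : ℚ) / (m : ℚ)⌉ := by
          intro k
          rw [Int.one_le_ceil_iff]
          apply div_pos
          · exact_mod_cast hpos k
          · exact_mod_cast hm0
        have : (n:ℤ) ≤ ∑ k : Fin n, ⌈((a k : ℤ) : ℚ) / (m : ℚ)⌉ := by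
          calc (n:ℤ) = ∑ _k : Fin n, (1:ℤ) := by simp
          _ ≤ _ := Finset.sum_le_sum (fun k _ => hge k)
        omega
    set i := m - t with hi
    have hi1 : 1 ≤ i := by omega
    have him : i ≤ m - 1 := by omega
    -- residues
    have hmod : ∀ k : Fin n, a k % m = (i * lam (Fin.castLE hnr k)) % m := by
      intro k
      have h1 : m ∣ a k - i * lam (Fin.castLE hnr k) := by
        obtain ⟨c, hc⟩ := hdvd k
        exact ⟨c - lam (Fin.castLE hnr k), by rw [hi]; linarith [hc]⟩
      exact Int.emod_emod_of_dvd_helper m _ _ h1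
    have htk : ∀ k : Fin n, 0 < (i * lam (Fin.castLE hnr k)) % m := fun k =>
      mod_pos_helper m i _ hm0 hi1 him (hcop _ k.isLt)
    refine ⟨i, hi1, him, fun k => a k / m, fun k => Int.ediv_nonneg (hpos k).le hm0.le,
      fun k => ?_, ?_⟩
    · beta_reduce
      have := Int.mul_ediv_add_emod (a k) m
      rw [← hmod k]; omega
    · -- sum condition
      beta_reduce
      have hceil : ∀ k : Fin n, ⌈((a k : ℤ) : ℚ) / (m : ℚ)⌉ = a k / m + 1 := by
        intro k
        have hak : a k = m * (a k / m) + (i * lam (Fin.castLE hnr k)) % m := by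
          have := Int.mul_ediv_add_emod (a k) m
          rw [← hmod k]; omega
        conv_lhs => rw [hak]
        exact ceil_helper m _ _ hm0 (htk k) (Int.emod_lt_of_pos _ hm0)
      have hfloor : ∀ k : Fin r, ⌊((t * lam k : ℤ) : ℚ) / (m : ℚ)⌋
          = lam k - ⌈((i * lam k : ℤ) : ℚ) / (m : ℚ)⌉ := by
        intro k
        have : t = m - i := by omega
        rw [this]
        exact floor_helper m i (lam k) hm0
      rw [Finset.sum_congr rfl (fun k _ => hceil k),
        Finset.sum_congr rfl (fun k _ => hfloor k), Finset.sum_add_distrib,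
        Finset.sum_sub_distrib, hsum, Finset.sum_const] at hS
      simp only [Finset.card_univ, Fintype.card_fin, nsmul_eq_mul, mul_one] at hS
      omega
  · rintro ⟨i, hi1, him, j, hj0, hja, hjS⟩
    have htk : ∀ k : Fin n, 0 < (i * lam (Fin.castLE hnr k)) % m := fun k =>
      mod_pos_helper m i _ hm0 hi1 him (hcop _ k.isLt)
    have hpos : ∀ k : Fin n, 0 < a k := by
      intro k
      rw [hja k]
      have := hj0 k
      have := htk k
      nlinarith
    refine ⟨hpos, m - i, by omega, by omega, fun k => ?_, ?_⟩
    · rw [hja k]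
      refine ⟨j k + lam (Fin.castLE hnr k) - i * lam (Fin.castLE hnr k) / m, ?_⟩
      have := Int.mul_ediv_add_emod (i * lam (Fin.castLE hnr k)) m
      ring_nf
      omega
    · have hceil : ∀ k : Fin n, ⌈((a k : ℤ) : ℚ) / (m : ℚ)⌉ = j k + 1 := by
        intro k
        rw [hja k]
        exact ceil_helper m _ _ hm0 (htk k) (Int.emod_lt_of_pos _ hm0)
      have hfloor : ∀ k : Fin r, ⌊(((m - i) * lam k : ℤ) : ℚ) / (m : ℚ)⌋
          = lam k - ⌈((i * lam k : ℤ) : ℚ) / (m : ℚ)⌉ := fun k => floor_helper m i (lam k) hm0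
      rw [Finset.sum_congr rfl (fun k _ => hceil k),
        Finset.sum_congr rfl (fun k _ => hfloor k), Finset.sum_add_distrib,
        Finset.sum_sub_distrib, hsum, Finset.sum_const]
      simp only [Finset.card_univ, Fintype.card_fin, nsmul_eq_mul, mul_one]
      omega
end

section
/- Let m ≥ 2 and 1 ≤ n ≤ r be integers, and let λ_1,…,λ_r ∈ ℤ satisfy Σ_{k=1}^{r} λ_k = 0 and gcd(λ_k, m) = 1 for 1 ≤ k ≤ n. For 1 ≤ i ≤ m−1 set t_k(i) := (iλ_k) mod m and β(i) := Σ_{k=1}^{r} ⌈iλ_k/m⌉ − 1. Then for every 1 ≤ i ≤ m−1 and every (j_1,…,j_n) ∈ ℤⁿ: Σ_{k=1}^{n} ⌈(mj_k + t_k(i))/m⌉ + Σ_{k=1}^{r} ⌊(m−i)λ_k/m⌋ = (j_1+⋯+j_n) + n − 1 − β(i). -/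
open Finset

/-- **Key identity in the proof of Theorem 3.5.** With `Σ λ_k = 0` and `gcd(λ_k, m) = 1`
for the first `n` indices: for every `1 ≤ i ≤ m−1` and every `j ∈ ℤⁿ`,
`Σ_{k=1}^n ⌈(m j_k + t_k(i))/m⌉ + Σ_{k=1}^r ⌊(m−i)λ_k/m⌋ = (Σ j_k) + n − 1 − β(i)`,
where `t_k(i) = (iλ_k) mod m` and `β(i) = Σ_{k=1}^r ⌈iλ_k/m⌉ − 1`. -/
theorem stmt_9 (m : ℤ) (hm : 2 ≤ m) (n r : ℕ) (hn : 1 ≤ n) (hnr : n ≤ r)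
    (lam : Fin r → ℤ) (hsum : ∑ k : Fin r, lam k = 0)
    (hcop : ∀ k : Fin r, k.val < n → Int.gcd (lam k) m = 1) :
    ∀ i : ℤ, 1 ≤ i → i ≤ m - 1 → ∀ j : Fin n → ℤ,
      (∑ k : Fin n, ⌈((m * j k + (i * lam (Fin.castLE hnr k)) % m : ℤ) : ℚ) / (m : ℚ)⌉)
        + (∑ k : Fin r, ⌊(((m - i) * lam k : ℤ) : ℚ) / (m : ℚ)⌋)
      = (∑ k : Fin n, j k) + n - 1
          - ((∑ k : Fin r, ⌈((i * lam k : ℤ) : ℚ) / (m : ℚ)⌉) - 1) := by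
  intro i hi1 hi2 j
  have hm0 : (0:ℤ) < m := by omega
  have hmQ : (m:ℚ) ≠ 0 := Int.cast_ne_zero.mpr (by omega)
  have key1 : ∀ k : Fin n,
      ⌈((m * j k + (i * lam (Fin.castLE hnr k)) % m : ℤ) : ℚ) / (m : ℚ)⌉ = j k + 1 := by
    intro k
    set t : ℤ := (i * lam (Fin.castLE hnr k)) % m with ht
    have hco : IsCoprime (m : ℤ) (lam (Fin.castLE hnr k)) := by
      rw [Int.isCoprime_iff_gcd_eq_one, Int.gcd_comm]
      exact hcop _ k.2
    have htpos : 0 < t := by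
      rcases (Int.emod_nonneg (i * lam (Fin.castLE hnr k)) hm0.ne').lt_or_eq with h | h
      · exact h
      · exfalso
        have hdvd : m ∣ i * lam (Fin.castLE hnr k) := Int.dvd_of_emod_eq_zero h.symm
        have : m ∣ i := hco.dvd_of_dvd_mul_right hdvd
        have := Int.le_of_dvd (by omega) this
        omega
    have htlt : t < m := Int.emod_lt_of_pos _ hm0
    have : ((m * j k + t : ℤ) : ℚ) / (m : ℚ) = (j k : ℚ) + (t : ℚ) / (m : ℚ) := by
      push_cast
      field_simp
    rw [this, add_comm, Int.ceil_add_intCast]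
    have h1 : ⌈(t : ℚ) / (m : ℚ)⌉ = 1 := by
      have h0 : (0:ℚ) < (t:ℚ) := by exact_mod_cast htpos
      have hM : (0:ℚ) < (m:ℚ) := by exact_mod_cast hm0
      rw [Int.ceil_eq_iff]
      constructor
      · simpa using div_pos h0 hM
      · push_cast
        rw [div_le_one hM]
        exact_mod_cast htlt.le
    rw [h1]; ring
  have key2 : ∀ k : Fin r,
      ⌊(((m - i) * lam k : ℤ) : ℚ) / (m : ℚ)⌋ = lam k - ⌈((i * lam k : ℤ) : ℚ) / (m : ℚ)⌉ := by
    intro k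
    have : (((m - i) * lam k : ℤ) : ℚ) / (m : ℚ)
        = (lam k : ℚ) + (-(((i * lam k : ℤ) : ℚ)) / (m : ℚ)) := by
      push_cast
      field_simp
      ring
    rw [this, add_comm, Int.floor_add_intCast, neg_div, Int.floor_neg]
    ring
  simp only [key1, key2, Finset.sum_add_distrib, Finset.sum_sub_distrib,
    Finset.sum_const, Finset.card_univ, Fintype.card_fin, smul_eq_mul, mul_one, hsum]
  push_cast
  ring
end

section
/- Let m ≥ 2 and 2 ≤ n ≤ r be integers, λ_1,…,λ_r ∈ ℤ with Σ_{k=1}^{r} λ_k = 0 and gcd(λ_k, m) = 1 for 1 ≤ k ≤ n, and let ρ ∈ {0, n−2}. For 1 ≤ i ≤ m−1 set t_k(i) := (iλ_k) mod m and β(i) := Σ_{k=1}^{r} ⌈iλ_k/m⌉ − 1, and let Υ := {(mj_1+t_1(i), …, mj_n+t_n(i)) : 1 ≤ i ≤ m−1, j_1,…,j_n ∈ ℤ_{≥0}, j_1+⋯+j_n = β(i)+1−n+ρ}. Then for every integer k ≥ 0, the number of elements α = (α_1,…,α_n) ∈ Υ with km ≤ α_1 < (k+1)m and 0 ≤ α_l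 < m for all 2 ≤ l ≤ n equals the number of indices i ∈ {1,…,m−1} with β(i)+1−n+ρ = k. -/
open Finset

/-- **Cardinality of the boxes `Υ_{k,0,…,0}`.** With `Σ λ_k = 0`, `gcd(λ_k, m) = 1` for
the first `n` indices, `ρ ∈ {0, n−2}`, and
`Υ = {(mj_k + t_k(i)) : 1 ≤ i ≤ m−1, j_k ≥ 0, Σ j_k = β(i)+1−n+ρ}`: for every integer
`K ≥ 0`, the number of `α ∈ Υ` with `Km ≤ α_1 < (K+1)m` and `0 ≤ α_l < m` for `l ≥ 2`
equals the number of `i ∈ {1,…,m−1}` with `β(i)+1−n+ρ = K`. -/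
theorem stmt_11 (m : ℤ) (hm : 2 ≤ m) (n r : ℕ) (hn : 2 ≤ n) (hnr : n ≤ r)
    (lam : Fin r → ℤ) (hsum : ∑ k : Fin r, lam k = 0)
    (hcop : ∀ k : Fin r, k.val < n → Int.gcd (lam k) m = 1)
    (ρ : ℤ) (hρ : ρ = 0 ∨ ρ = (n : ℤ) - 2)
    (U : Set (Fin n → ℤ))
    (hU : U = {a : Fin n → ℤ | ∃ i : ℤ, 1 ≤ i ∧ i ≤ m - 1 ∧ ∃ j : Fin n → ℤ,
          (∀ k : Fin n, 0 ≤ j k) ∧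
          (∀ k : Fin n, a k = m * j k + (i * lam (Fin.castLE hnr k)) % m) ∧
          (∑ k : Fin n, j k)
            = ((∑ k : Fin r, ⌈((i * lam k : ℤ) : ℚ) / (m : ℚ)⌉) - 1) + 1 - n + ρ})
    (K : ℤ) (hK : 0 ≤ K) :
    {a ∈ U | K * m ≤ a ⟨0, by omega⟩ ∧ a ⟨0, by omega⟩ < (K + 1) * m ∧
        ∀ l : Fin n, l.val ≠ 0 → 0 ≤ a l ∧ a l < m}.ncard
      = ((Finset.Icc (1 : ℤ) (m - 1)).filter (fun i =>
          ((∑ k : Fin r, ⌈((i * lam k : ℤ) : ℚ) / (m : ℚ)⌉) - 1) + 1 - n + ρ = K)).card := by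
  subst hU
  have hm0 : (0 : ℤ) < m := by omega
  set i0 : Fin n := ⟨0, by omega⟩ with hi0
  set T : ℤ → Fin n → ℤ := fun i k => (i * lam (Fin.castLE hnr k)) % m with hT
  have hT0 : ∀ i k, 0 ≤ T i k := fun i k => Int.emod_nonneg _ (by omega)
  have hTm : ∀ i k, T i k < m := fun i k => Int.emod_lt_of_pos _ hm0
  set F : ℤ → Fin n → ℤ := fun i k => (if k = i0 then K * m else 0) + T i k with hF
  set filt := (Finset.Icc (1 : ℤ) (m - 1)).filter (fun i =>
          ((∑ k : Fin r, ⌈((i * lam k : ℤ) : ℚ) / (m : ℚ)⌉) - 1) + 1 - n + ρ = K) with hfilt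
  have key : {a ∈ {a : Fin n → ℤ | ∃ i : ℤ, 1 ≤ i ∧ i ≤ m - 1 ∧ ∃ j : Fin n → ℤ,
          (∀ k : Fin n, 0 ≤ j k) ∧
          (∀ k : Fin n, a k = m * j k + (i * lam (Fin.castLE hnr k)) % m) ∧
          (∑ k : Fin n, j k)
            = ((∑ k : Fin r, ⌈((i * lam k : ℤ) : ℚ) / (m : ℚ)⌉) - 1) + 1 - n + ρ}
      | K * m ≤ a ⟨0, by omega⟩ ∧ a ⟨0, by omega⟩ < (K + 1) * m ∧
        ∀ l : Fin n, l.val ≠ 0 → 0 ≤ a l ∧ a l < m} = F '' ↑filt := by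
    ext a
    simp only [Set.mem_sep_iff, Set.mem_setOf_eq, Set.mem_image, hfilt,
      Finset.mem_coe, Finset.mem_filter, Finset.mem_Icc]
    constructor
    · rintro ⟨⟨i, hi1, hi2, j, hj0, hja, hjsum⟩, h1, h2, hbox⟩
      have h1' : K * m ≤ a i0 := h1
      have h2' : a i0 < (K + 1) * m := h2
      -- j l = 0 for l ≠ i0
      have hjz : ∀ l : Fin n, l ≠ i0 → j l = 0 := by
        intro l hl
        have hlv : l.val ≠ 0 := fun h => hl (Fin.ext h)
        obtain ⟨hb1, hb2⟩ := hbox l hlv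
        have hal := hja l
        have h0 : 0 ≤ T i l := hT0 i l
        have hmm : T i l < m := hTm i l
        simp only [hT] at h0 hmm
        have hmul : m * j l < m * 1 := by omega
        have := lt_of_mul_lt_mul_left hmul (by omega : (0:ℤ) ≤ m)
        have := hj0 l
        omega
      -- j i0 = K
      have hjK : j i0 = K := by
        have hal := hja i0
        have h0 : 0 ≤ T i i0 := hT0 i i0
        have hmm : T i i0 < m := hTm i i0
        simp only [hT] at h0 hmm
        have e1 : (K + 1) * m = K * m + m := by ring
        have e2 : m * (K + 1) = K * m + m := by ring
        have e3 : m * (K - 1) = K * m - m := by ring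
        have hlt : m * j i0 < m * (K + 1) := by omega
        have hgt : m * (K - 1) < m * j i0 := by omega
        have ha := lt_of_mul_lt_mul_left hlt (by omega : (0:ℤ) ≤ m)
        have hb := lt_of_mul_lt_mul_left hgt (by omega : (0:ℤ) ≤ m)
        omega
      have hsumK : ∑ k : Fin n, j k = K := by
        rw [Finset.sum_eq_single_of_mem i0 (Finset.mem_univ _)
          (fun b _ hb => hjz b hb)]
        exact hjK
      refine ⟨i, ⟨⟨hi1, hi2⟩, by omega⟩, ?_⟩
      funext k
      have hjk : j k = if k = i0 then K else 0 := by
        by_cases hk : k = i0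
        · simp [hk, hjK]
        · simp [hk, hjz k hk]
      simp only [hF, hT]
      rw [hja k, hjk]
      by_cases hk : k = i0 <;> simp [hk] <;> ring
    · rintro ⟨i, ⟨⟨hi1, hi2⟩, hiK⟩, rfl⟩
      have h0 : ∀ k, 0 ≤ T i k := hT0 i
      have hmm : ∀ k, T i k < m := hTm i
      have hFi0 : F i i0 = K * m + T i i0 := by simp [hF]
      refine ⟨⟨i, hi1, hi2, fun k => if k = i0 then K else 0, ?_, ?_, ?_⟩, ?_, ?_, ?_⟩
      · intro k; dsimp only; split <;> omega
      · intro k; simp only [hF, hT]; split <;> ring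
      · rw [Finset.sum_ite_eq' Finset.univ i0 (fun _ => K)]
        simp only [Finset.mem_univ, if_true]
        omega
      · show K * m ≤ F i i0
        rw [hFi0]; linarith [h0 i0]
      · show F i i0 < (K + 1) * m
        rw [hFi0]; linarith [hmm i0]
      · intro l hl
        have hne : l ≠ i0 := fun h => hl (by rw [h])
        show 0 ≤ (if l = i0 then K * m else 0) + T i l ∧
          (if l = i0 then K * m else 0) + T i l < m
        rw [if_neg hne, zero_add]
        exact ⟨h0 l, hmm l⟩
  rw [key]
  have hinj : Set.InjOn F ↑filt := by
    intro i hi i' hi' heq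
    simp only [hfilt, Finset.coe_filter, Set.mem_setOf_eq, Finset.mem_Icc] at hi hi'
    have heq0 := congrFun heq i0
    simp only [hF, if_pos rfl] at heq0
    have hmod : T i i0 = T i' i0 := by omega
    have hModEq : i * lam (Fin.castLE hnr i0) ≡ i' * lam (Fin.castLE hnr i0) [ZMOD m] :=
      hmod
    have hdvd : m ∣ (i' - i) * lam (Fin.castLE hnr i0) := by
      have := Int.ModEq.dvd hModEq
      have heq2 : i' * lam (Fin.castLE hnr i0) - i * lam (Fin.castLE hnr i0)
          = (i' - i) * lam (Fin.castLE hnr i0) := by ring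
      rwa [heq2] at this
    have hc : IsCoprime m (lam (Fin.castLE hnr i0)) :=
      (Int.isCoprime_iff_gcd_eq_one.mpr (hcop _ (by simp [hi0]; omega))).symm
    have hdvd2 : m ∣ (i' - i) := hc.dvd_of_dvd_mul_right hdvd
    have hz : i' - i = 0 := Int.eq_zero_of_abs_lt_dvd hdvd2 (by
      rw [abs_lt]; constructor <;> omega)
    omega
  rw [Set.ncard_image_of_injOn hinj, Set.ncard_coe_finset]
end

section
/- Let m ≥ 2 and t ≥ 2 be integers, let N be an integer with 2 ≤ N ≤ t, and let ρ ∈ {0, N−2}. Then the set of α = (α_1,…,α_N) ∈ ℤᴺ for which there exists u ∈ {0,…,m−1} with α_k + u ≡ 0 (mod m) for every 1 ≤ k ≤ N and Σ_{k=1}^{N} ⌈α_k/m⌉ + ⌊−tu/m⌋ = ρ equals the union of {(mj_1+i, …, mj_N+i) : 1 ≤ i ≤ m−1, j_1,…,j_N ∈ ℤ, j_1+⋯+j_N = t − N − ⌊it/m⌋ + ρ} and {(mj_1, …, mj_N) : j_1,…,j_N ∈ ℤ, j_1+⋯+j_N = ρ}. -/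
open Finset


lemma ceil_div_aux (m j i : ℤ) (hm : 0 < m) :
    ⌈((m * j + i : ℤ) : ℚ) / (m : ℚ)⌉ = ⌈(i : ℚ) / (m : ℚ)⌉ + j := by
  have hm' : (m : ℚ) ≠ 0 := by exact_mod_cast hm.ne'
  rw [show ((m * j + i : ℤ) : ℚ) / (m : ℚ) = (i : ℚ) / (m : ℚ) + (j : ℚ) by
    push_cast; field_simp; ring]
  exact Int.ceil_add_intCast _ j

lemma floor_div_aux (m j i : ℤ) (hm : 0 < m) :
    ⌊((m * j + i : ℤ) : ℚ) / (m : ℚ)⌋ = ⌊(i : ℚ) / (m : ℚ)⌋ + j := by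
  have hm' : (m : ℚ) ≠ 0 := by exact_mod_cast hm.ne'
  rw [show ((m * j + i : ℤ) : ℚ) / (m : ℚ) = (i : ℚ) / (m : ℚ) + (j : ℚ) by
    push_cast; field_simp; ring]
  exact Int.floor_add_intCast _ j

lemma ceil_small (m i : ℤ) (hm : 0 < m) (h1 : 1 ≤ i) (h2 : i ≤ m) :
    ⌈(i : ℚ) / (m : ℚ)⌉ = 1 := by
  have hm' : (0:ℚ) < (m:ℚ) := by exact_mod_cast hm
  have hi' : (0:ℚ) < (i:ℚ) := by exact_mod_cast h1
  rw [Int.ceil_eq_iff]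
  refine ⟨by push_cast; simpa using div_pos hi' hm', ?_⟩
  rw [Int.cast_one, div_le_one hm']; exact_mod_cast h2


/-- **Proposition 4.2 (arithmetic form).** For the curve `y^m = f(x)` with `f` separable
of degree `t ≥ 2`, `2 ≤ N ≤ t`, and `ρ ∈ {0, N−2}`: the set of `α ∈ ℤᴺ` admitting
`u ∈ {0,…,m−1}` with `α_k + u ≡ 0 (mod m)` for all `k` and
`Σ⌈α_k/m⌉ + ⌊−tu/m⌋ = ρ` equals the union of
`{(mj_k + i) : 1 ≤ i ≤ m−1, Σ j_k = t − N − ⌊it/m⌋ + ρ}` and `{(mj_k) : Σ j_k = ρ}`. -/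
theorem stmt_12 (m t : ℤ) (hm : 2 ≤ m) (ht : 2 ≤ t)
    (N : ℕ) (hN : 2 ≤ N) (hNt : (N : ℤ) ≤ t)
    (ρ : ℤ) (hρ : ρ = 0 ∨ ρ = (N : ℤ) - 2) :
    {a : Fin N → ℤ | ∃ u : ℤ, 0 ≤ u ∧ u ≤ m - 1 ∧
        (∀ k : Fin N, m ∣ a k + u) ∧
        (∑ k : Fin N, ⌈((a k : ℤ) : ℚ) / (m : ℚ)⌉)
          + ⌊((-t * u : ℤ) : ℚ) / (m : ℚ)⌋ = ρ}
    = {a : Fin N → ℤ | ∃ i : ℤ, 1 ≤ i ∧ i ≤ m - 1 ∧ ∃ j : Fin N → ℤ,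
          (∀ k : Fin N, a k = m * j k + i) ∧
          (∑ k : Fin N, j k) = t - N - ⌊((i * t : ℤ) : ℚ) / (m : ℚ)⌋ + ρ}
      ∪ {a : Fin N → ℤ | ∃ j : Fin N → ℤ,
          (∀ k : Fin N, a k = m * j k) ∧ (∑ k : Fin N, j k) = ρ} := by
  have hm0 : 0 < m := by omega
  ext a
  simp only [Set.mem_setOf_eq, Set.mem_union]
  constructor
  · rintro ⟨u, hu0, hum, hdvd, hsum⟩
    rcases eq_or_lt_of_le hu0 with h0 | hpos
    · -- u = 0
      right
      have hd : ∀ k : Fin N, m ∣ a k := by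
        intro k; have := hdvd k; rw [← h0, add_zero] at this; exact this
      have hak : ∀ k : Fin N, a k = m * (a k / m) := by
        intro k; exact (Int.mul_ediv_cancel' (hd k)).symm
      have hceil : ∀ k : Fin N, ⌈((a k : ℤ) : ℚ) / (m : ℚ)⌉ = a k / m := by
        intro k
        rw [show ((a k : ℤ) : ℚ) = ((m * (a k / m) + 0 : ℤ) : ℚ) by
          rw [add_zero, Int.mul_ediv_cancel' (hd k)],
          ceil_div_aux m _ 0 hm0]
        simp
      refine ⟨fun k => a k / m, hak, ?_⟩
      show (∑ k : Fin N, a k / m) = ρ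
      rw [Finset.sum_congr rfl (fun k _ => (hceil k).symm)]
      rw [← h0] at hsum
      simpa using hsum
    · -- 1 ≤ u, set i = m - u
      left
      set i : ℤ := m - u with hi
      have hak : ∀ k : Fin N, a k = m * ((a k + u) / m - 1) + i := by
        intro k
        have h1 := Int.mul_ediv_cancel' (hdvd k)
        have h2 : m * ((a k + u) / m - 1) = m * ((a k + u) / m) - m := by ring
        omega
      refine ⟨i, by omega, by omega, fun k => (a k + u) / m - 1, hak, ?_⟩
      show (∑ k : Fin N, ((a k + u) / m - 1)) = _
      have hceil : ∀ k : Fin N, ⌈((a k : ℤ) : ℚ) / (m : ℚ)⌉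
          = ((a k + u) / m - 1) + 1 := by
        intro k
        conv_lhs => rw [hak k]
        rw [ceil_div_aux m _ i hm0, ceil_small m i hm0 (by omega) (by omega)]
        ring
      have hfl : ⌊((-t * u : ℤ) : ℚ) / (m : ℚ)⌋
          = ⌊((i * t : ℤ) : ℚ) / (m : ℚ)⌋ + (-t) := by
        rw [show -t * u = m * (-t) + i * t by rw [hi]; ring,
          floor_div_aux m (-t) (i * t) hm0]
      rw [Finset.sum_congr rfl (fun k _ => hceil k), Finset.sum_add_distrib,
        hfl] at hsum
      simp only [Finset.sum_const, Finset.card_univ, Fintype.card_fin,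
        nsmul_eq_mul, mul_one] at hsum
      omega
  · rintro (⟨i, hi1, him, j, hak, hsum⟩ | ⟨j, hak, hsum⟩)
    · refine ⟨m - i, by omega, by omega, fun k => ⟨j k + 1, by rw [hak k]; ring⟩, ?_⟩
      have hceil : ∀ k : Fin N, ⌈((a k : ℤ) : ℚ) / (m : ℚ)⌉ = 1 + j k := by
        intro k
        rw [hak k, ceil_div_aux m _ i hm0, ceil_small m i hm0 (by omega) (by omega)]
      have hfl : ⌊((-t * (m - i) : ℤ) : ℚ) / (m : ℚ)⌋
          = ⌊((i * t : ℤ) : ℚ) / (m : ℚ)⌋ + (-t) := by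
        rw [show -t * (m - i) = m * (-t) + i * t by ring,
          floor_div_aux m (-t) (i * t) hm0]
      rw [Finset.sum_congr rfl (fun k _ => hceil k), Finset.sum_add_distrib, hfl]
      simp only [Finset.sum_const, Finset.card_univ, Fintype.card_fin,
        nsmul_eq_mul, mul_one]
      omega
    · refine ⟨0, le_refl 0, by omega, fun k => ⟨j k, by rw [hak k, add_zero]⟩, ?_⟩
      have hceil : ∀ k : Fin N, ⌈((a k : ℤ) : ℚ) / (m : ℚ)⌉ = j k := by
        intro k
        rw [show a k = m * j k + 0 by rw [hak k, add_zero],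
          ceil_div_aux m _ 0 hm0]
        simp
      rw [Finset.sum_congr rfl (fun k _ => hceil k)]
      simpa using hsum
end

section
/- Let q ≥ 2 be an integer (a prime power), let n ≥ 3 be odd, set M' = qⁿ + 1, let N be an integer with 2 ≤ N ≤ q+1, and let ρ ∈ {0, N−2}. For 1 ≤ i ≤ M'−1 set β(i) := q + 1 + (q²−q−1)⌈i(q+1)/M'⌉ − ⌊i(q³−q)/M'⌋ − 1. Then the set of α = (α_1,…,α_N) ∈ ℤᴺ for which there exists u ∈ {0,…,M'−1} with α_k + u ≡ 0 (mod M') for every 1 ≤ k ≤ N and Σ_{k=1}^{N} ⌈α_k/M'⌉ + (q²−q−1)⌊u(q+1)/M'⌋ + ⌊−u(q³−q)/M'⌋ = ρ equals the union of {(M'j_1+i, …, M'j_N+i) : 1 ≤ i ≤ M'−1, j_1,…,j_N ∈ ℤ, j_1+⋯+j_N = β(i)+1−N+ρ} and {(M'j_1, …, M'j_N) : j_1,…,j_N ∈ ℤ, j_1+⋯+j_N = ρ}. -/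
open Finset

/-- **Proposition 4.3 (arithmetic form), Beelen–Montanucci curve.** Let `q ≥ 2`, `n ≥ 3`
odd, `M' = qⁿ + 1`, `2 ≤ N ≤ q+1`, `ρ ∈ {0, N−2}`, and for `1 ≤ i ≤ M'−1` let
`β(i) = q + 1 + (q²−q−1)⌈i(q+1)/M'⌉ − ⌊i(q³−q)/M'⌋ − 1`. Then the set of `α ∈ ℤᴺ`
admitting `u ∈ {0,…,M'−1}` with `α_k + u ≡ 0 (mod M')` for all `k` and
`Σ⌈α_k/M'⌉ + (q²−q−1)⌊u(q+1)/M'⌋ + ⌊−u(q³−q)/M'⌋ = ρ` equals the union of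
`{(M'j_k + i) : 1 ≤ i ≤ M'−1, Σ j_k = β(i)+1−N+ρ}` and `{(M'j_k) : Σ j_k = ρ}`. -/
theorem stmt_13 (q : ℤ) (hq : 2 ≤ q) (n : ℕ) (hn : 3 ≤ n) (hodd : Odd n)
    (N : ℕ) (hN : 2 ≤ N) (hNq : (N : ℤ) ≤ q + 1)
    (ρ : ℤ) (hρ : ρ = 0 ∨ ρ = (N : ℤ) - 2) :
    {a : Fin N → ℤ | ∃ u : ℤ, 0 ≤ u ∧ u ≤ (q ^ n + 1) - 1 ∧
        (∀ k : Fin N, (q ^ n + 1) ∣ a k + u) ∧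
        (∑ k : Fin N, ⌈((a k : ℤ) : ℚ) / ((q ^ n + 1 : ℤ) : ℚ)⌉)
          + (q ^ 2 - q - 1) * ⌊((u * (q + 1) : ℤ) : ℚ) / ((q ^ n + 1 : ℤ) : ℚ)⌋
          + ⌊((-u * (q ^ 3 - q) : ℤ) : ℚ) / ((q ^ n + 1 : ℤ) : ℚ)⌋ = ρ}
    = {a : Fin N → ℤ | ∃ i : ℤ, 1 ≤ i ∧ i ≤ (q ^ n + 1) - 1 ∧ ∃ j : Fin N → ℤ,
          (∀ k : Fin N, a k = (q ^ n + 1) * j k + i) ∧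
          (∑ k : Fin N, j k)
            = (q + 1 + (q ^ 2 - q - 1) * ⌈((i * (q + 1) : ℤ) : ℚ) / ((q ^ n + 1 : ℤ) : ℚ)⌉
                - ⌊((i * (q ^ 3 - q) : ℤ) : ℚ) / ((q ^ n + 1 : ℤ) : ℚ)⌋ - 1) + 1 - N + ρ}
      ∪ {a : Fin N → ℤ | ∃ j : Fin N → ℤ,
          (∀ k : Fin N, a k = (q ^ n + 1) * j k) ∧ (∑ k : Fin N, j k) = ρ} := by
  set M : ℤ := q ^ n + 1 with hMdef
  have hqn : (2:ℤ) ≤ q ^ n := by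
    calc (2:ℤ) ≤ q := hq
    _ ≤ q ^ n := le_self_pow₀ (by omega) (by omega)
  have hM2 : 2 ≤ M := by omega
  have hMQ : (0:ℚ) < ((M : ℤ) : ℚ) := by exact_mod_cast (by omega : (0:ℤ) < M)
  have hMne : ((M : ℤ) : ℚ) ≠ 0 := ne_of_gt hMQ
  -- floor/ceil shift lemmas
  have hfloorM : ∀ a b : ℤ, ⌊((M * b + a : ℤ) : ℚ) / ((M : ℤ) : ℚ)⌋
      = b + ⌊((a : ℤ) : ℚ) / ((M : ℤ) : ℚ)⌋ := by
    intro a b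
    push_cast
    rw [add_div, mul_comm, mul_div_assoc, div_self hMne, mul_one, Int.floor_intCast_add]
  have hceilM : ∀ a b : ℤ, ⌈((M * b + a : ℤ) : ℚ) / ((M : ℤ) : ℚ)⌉
      = b + ⌈((a : ℤ) : ℚ) / ((M : ℤ) : ℚ)⌉ := by
    intro a b
    push_cast
    rw [add_div, mul_comm, mul_div_assoc, div_self hMne, mul_one, add_comm, Int.ceil_add_intCast, add_comm]
  have hceil1 : ∀ i : ℤ, 1 ≤ i → i ≤ M - 1 → ⌈((i : ℤ) : ℚ) / ((M : ℤ) : ℚ)⌉ = 1 := by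
    intro i h1 h2
    have hi0 : (0:ℚ) < ((i:ℤ):ℚ) := by exact_mod_cast (show (0:ℤ) < i by omega)
    have hiM : ((i:ℤ):ℚ) ≤ ((M:ℤ):ℚ) := by exact_mod_cast (show i ≤ M by omega)
    rw [Int.ceil_eq_iff]
    constructor
    · rw [Int.cast_one]
      simpa using div_pos hi0 hMQ
    · rw [Int.cast_one, div_le_one hMQ]
      exact hiM
  have hceil0 : ⌈((0 : ℤ) : ℚ) / ((M : ℤ) : ℚ)⌉ = 0 := by norm_num
  have hfloor0 : ⌊((0 : ℤ) : ℚ) / ((M : ℤ) : ℚ)⌋ = 0 := by norm_num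
  ext a
  simp only [Set.mem_setOf_eq, Set.mem_union]
  constructor
  · rintro ⟨u, hu0, huM, hdvd, hsum⟩
    rcases eq_or_lt_of_le hu0 with hu | hu
    · -- u = 0
      right
      refine ⟨fun k => (a k) / M, fun k => ?_, ?_⟩
      · have := hdvd k
        rw [← hu, add_zero] at this
        exact (Int.ediv_mul_cancel this).symm.trans (mul_comm _ _)
      · have ha : ∀ k : Fin N, a k = M * (a k / M) := by
          intro k
          have := hdvd k
          rw [← hu, add_zero] at this
          exact (Int.mul_ediv_cancel' this).symm
        rw [← hu] at hsum
        simp only [neg_zero, zero_mul, hfloor0] at hsum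
        calc ∑ k : Fin N, a k / M
            = ∑ k : Fin N, ⌈((a k : ℤ) : ℚ) / ((M : ℤ) : ℚ)⌉ := by
              refine Finset.sum_congr rfl fun k _ => ?_
              conv_rhs => rw [ha k]
              rw [show M * (a k / M) = M * (a k / M) + 0 by ring, hceilM, hceil0, add_zero]
        _ = ρ := by linarith [hsum]
    · -- 1 ≤ u ≤ M - 1
      left
      set i : ℤ := M - u with hidef
      have ha : ∀ k : Fin N, a k = M * ((a k + u) / M - 1) + i := by
        intro k
        have h := hdvd k
        have hc : a k + u = M * ((a k + u) / M) := (Int.mul_ediv_cancel' h).symm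
        have hr : M * ((a k + u) / M - 1) = M * ((a k + u) / M) - M := by ring
        rw [hidef]; omega
      refine ⟨i, by omega, by omega, fun k => (a k + u) / M - 1, ha, ?_⟩
      · have hceilsum : ∑ k : Fin N, ⌈((a k : ℤ) : ℚ) / ((M : ℤ) : ℚ)⌉
            = (∑ k : Fin N, ((a k + u) / M - 1)) + N := by
          calc ∑ k : Fin N, ⌈((a k : ℤ) : ℚ) / ((M : ℤ) : ℚ)⌉
              = ∑ k : Fin N, (((a k + u) / M - 1) + 1) := by
                refine Finset.sum_congr rfl fun k _ => ?_
                conv_lhs => rw [ha k]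
                rw [hceilM, hceil1 i (by omega) (by omega)]
          _ = (∑ k : Fin N, ((a k + u) / M - 1)) + N := by
                rw [Finset.sum_add_distrib]
                simp
        have hf1 : ⌊((u * (q + 1) : ℤ) : ℚ) / ((M : ℤ) : ℚ)⌋
            = (q + 1) + ⌊((-(i * (q + 1)) : ℤ) : ℚ) / ((M : ℤ) : ℚ)⌋ := by
          rw [show u * (q + 1) = M * (q + 1) + (-(i * (q + 1))) by rw [hidef]; ring,
            hfloorM]
        have hf2 : ⌊((-u * (q ^ 3 - q) : ℤ) : ℚ) / ((M : ℤ) : ℚ)⌋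
            = (-(q ^ 3 - q)) + ⌊((i * (q ^ 3 - q) : ℤ) : ℚ) / ((M : ℤ) : ℚ)⌋ := by
          rw [show -u * (q ^ 3 - q) = M * (-(q ^ 3 - q)) + i * (q ^ 3 - q) by
            rw [hidef]; ring, hfloorM]
        have hneg : ⌊((-(i * (q + 1)) : ℤ) : ℚ) / ((M : ℤ) : ℚ)⌋
            = -⌈((i * (q + 1) : ℤ) : ℚ) / ((M : ℤ) : ℚ)⌉ := by
          push_cast
          rw [neg_div, Int.floor_neg]
        rw [hceilsum, hf1, hneg, hf2] at hsum
        set A := ⌈((i * (q + 1) : ℤ) : ℚ) / ((M : ℤ) : ℚ)⌉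
        set B := ⌊((i * (q ^ 3 - q) : ℤ) : ℚ) / ((M : ℤ) : ℚ)⌋
        nlinarith [hsum]
  · rintro (⟨i, h1, h2, j, ha, hsum⟩ | ⟨j, ha, hsum⟩)
    · refine ⟨M - i, by omega, by omega, fun k => ⟨j k + 1, by rw [ha k]; ring⟩, ?_⟩
      have hceilsum : ∑ k : Fin N, ⌈((a k : ℤ) : ℚ) / ((M : ℤ) : ℚ)⌉
          = (∑ k : Fin N, j k) + N := by
        calc ∑ k : Fin N, ⌈((a k : ℤ) : ℚ) / ((M : ℤ) : ℚ)⌉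
            = ∑ k : Fin N, (j k + 1) := by
              refine Finset.sum_congr rfl fun k _ => ?_
              rw [ha k, hceilM, hceil1 i h1 h2]
        _ = (∑ k : Fin N, j k) + N := by
              rw [Finset.sum_add_distrib]
              simp
      have hf1 : ⌊(((M - i) * (q + 1) : ℤ) : ℚ) / ((M : ℤ) : ℚ)⌋
          = (q + 1) + ⌊((-(i * (q + 1)) : ℤ) : ℚ) / ((M : ℤ) : ℚ)⌋ := by
        rw [show (M - i) * (q + 1) = M * (q + 1) + (-(i * (q + 1))) by ring, hfloorM]
      have hf2 : ⌊((-(M - i) * (q ^ 3 - q) : ℤ) : ℚ) / ((M : ℤ) : ℚ)⌋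
          = (-(q ^ 3 - q)) + ⌊((i * (q ^ 3 - q) : ℤ) : ℚ) / ((M : ℤ) : ℚ)⌋ := by
        rw [show -(M - i) * (q ^ 3 - q) = M * (-(q ^ 3 - q)) + i * (q ^ 3 - q) by ring,
          hfloorM]
      have hneg : ⌊((-(i * (q + 1)) : ℤ) : ℚ) / ((M : ℤ) : ℚ)⌋
          = -⌈((i * (q + 1) : ℤ) : ℚ) / ((M : ℤ) : ℚ)⌉ := by
        push_cast
        rw [neg_div, Int.floor_neg]
      rw [hceilsum, hf1, hneg, hf2]
      set A := ⌈((i * (q + 1) : ℤ) : ℚ) / ((M : ℤ) : ℚ)⌉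
      set B := ⌊((i * (q ^ 3 - q) : ℤ) : ℚ) / ((M : ℤ) : ℚ)⌋
      rw [hsum]
      ring
    · refine ⟨0, le_refl 0, by omega, fun k => ⟨j k, by rw [ha k]; ring⟩, ?_⟩
      have hceilsum : ∑ k : Fin N, ⌈((a k : ℤ) : ℚ) / ((M : ℤ) : ℚ)⌉
          = ∑ k : Fin N, j k := by
        refine Finset.sum_congr rfl fun k _ => ?_
        rw [ha k, show M * j k = M * j k + 0 by ring, hceilM, hceil0, add_zero]
      simp only [neg_zero, zero_mul, hfloor0, hceilsum]
      rw [hsum]; ring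
end

section
/- Let q ≥ 2 be an integer and d ≥ 1 an integer dividing q with d < q (in the paper q = p^a is a prime power and d ∈ {p^b, 1} with b ∣ a, b < a). Let M̃ ≥ 2 be an integer dividing qⁿ+1 of the form M̃ = (qⁿ+1)/s where n ≥ 3 is odd and s divides (qⁿ+1)/(q+1). Let N be an integer with 2 ≤ N ≤ q/d and let ρ ∈ {0, N−2}. For 1 ≤ i ≤ M̃−1 set β(i) := (q/d) + (q(q−1)/d)⌈i(q+1)/M̃⌉ − ⌊iq³/(dM̃)⌋ − 1. Then the set of α = (α_1,…,α_N) ∈ ℤᴺ for which there exists u ∈ {0,…,M̃−1} with α_k + u ≡ 0 (mod M̃) for every 1 ≤ k ≤ N and Σ_{k=1}^{N} ⌈α_k/M̃⌉ + (q(q−1)/d)⌊u(q+1)/M̃⌋ + ⌊−uq³/(dM̃)⌋ = ρ equals the union of {(M̃j_1+i, …, M̃j_N+i) : 1 ≤ i ≤ M̃−1, j_1,…,j_N ∈ ℤ, j_1+⋯+j_N = β(i)+1−N+ρ} and {(M̃j_1, …, M̃j_N) : j_1,…,j_N ∈ ℤ, j_1+⋯+j_N = ρ}. -/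
open Finset

lemma fl' (a b : ℤ) (hb : 0 < b) : ⌊(a:ℚ)/(b:ℚ)⌋ = a / b := by
  lift b to ℕ using hb.le
  exact_mod_cast Rat.floor_intCast_div_natCast a b

lemma ce' (a b : ℤ) (hb : 0 < b) : ⌈(a:ℚ)/(b:ℚ)⌉ = -(-a / b) := by
  have h : (a:ℚ)/b = -(((-a : ℤ):ℚ)/b) := by push_cast; ring
  rw [h, Int.ceil_neg, fl' _ _ hb]

lemma negdiv (i M : ℤ) (h1 : 1 ≤ i) (h2 : i ≤ M - 1) : -i / M = -1 := by
  have hM : (0:ℤ) < M := by omega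
  have h : -i = (M - i) + (-1) * M := by ring
  rw [h, Int.add_mul_ediv_right _ _ hM.ne',
    Int.ediv_eq_zero_of_lt (by omega) (by omega)]
  ring

lemma ceil_Mji (M j i : ℤ) (h1 : 1 ≤ i) (h2 : i ≤ M - 1) :
    ⌈((M*j+i : ℤ):ℚ)/(M:ℚ)⌉ = j + 1 := by
  have hM : (0:ℤ) < M := by omega
  rw [ce' _ _ hM]
  have h : -(M*j+i) = -i + (-j) * M := by ring
  rw [h, Int.add_mul_ediv_right _ _ hM.ne', negdiv i M h1 h2]
  ring

lemma ceil_Mj (M j : ℤ) (hM : 0 < M) : ⌈((M*j : ℤ):ℚ)/(M:ℚ)⌉ = j := by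
  rw [ce' _ _ hM]
  have h : -(M*j) = (-j) * M := by ring
  rw [h, Int.mul_ediv_cancel _ hM.ne']
  ring

/-- **Proposition 4.1 (arithmetic form), curves `X_{a,b,n,s}` and `Y_{n,s}`.** Let
`q ≥ 2`, `d ∣ q` with `1 ≤ d < q`, `n ≥ 3` odd, `s ∣ (qⁿ+1)/(q+1)`, `M̃ = (qⁿ+1)/s ≥ 2`,
`2 ≤ N ≤ q/d`, `ρ ∈ {0, N−2}`, and for `1 ≤ i ≤ M̃−1` let
`β(i) = q/d + (q(q−1)/d)⌈i(q+1)/M̃⌉ − ⌊iq³/(dM̃)⌋ − 1`. Then the set of `α ∈ ℤᴺ`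
admitting `u ∈ {0,…,M̃−1}` with `α_k + u ≡ 0 (mod M̃)` for all `k` and
`Σ⌈α_k/M̃⌉ + (q(q−1)/d)⌊u(q+1)/M̃⌋ + ⌊−uq³/(dM̃)⌋ = ρ` equals the union of
`{(M̃j_k + i) : 1 ≤ i ≤ M̃−1, Σ j_k = β(i)+1−N+ρ}` and `{(M̃j_k) : Σ j_k = ρ}`. -/
theorem stmt_14 (q d : ℤ) (hq : 2 ≤ q) (hd1 : 1 ≤ d) (hdq : d ∣ q) (hdlt : d < q)
    (n : ℕ) (hn : 3 ≤ n) (hodd : Odd n)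
    (s M : ℤ) (hs : s ∣ (q ^ n + 1) / (q + 1)) (hM : M * s = q ^ n + 1) (hM2 : 2 ≤ M)
    (N : ℕ) (hN : 2 ≤ N) (hNq : (N : ℤ) ≤ q / d)
    (ρ : ℤ) (hρ : ρ = 0 ∨ ρ = (N : ℤ) - 2) :
    {a : Fin N → ℤ | ∃ u : ℤ, 0 ≤ u ∧ u ≤ M - 1 ∧
        (∀ k : Fin N, M ∣ a k + u) ∧
        (∑ k : Fin N, ⌈((a k : ℤ) : ℚ) / (M : ℚ)⌉)
          + (q * (q - 1) / d) * ⌊((u * (q + 1) : ℤ) : ℚ) / (M : ℚ)⌋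
          + ⌊((-u * q ^ 3 : ℤ) : ℚ) / ((d * M : ℤ) : ℚ)⌋ = ρ}
    = {a : Fin N → ℤ | ∃ i : ℤ, 1 ≤ i ∧ i ≤ M - 1 ∧ ∃ j : Fin N → ℤ,
          (∀ k : Fin N, a k = M * j k + i) ∧
          (∑ k : Fin N, j k)
            = (q / d + (q * (q - 1) / d) * ⌈((i * (q + 1) : ℤ) : ℚ) / (M : ℚ)⌉
                - ⌊((i * q ^ 3 : ℤ) : ℚ) / ((d * M : ℤ) : ℚ)⌋ - 1) + 1 - N + ρ}
      ∪ {a : Fin N → ℤ | ∃ j : Fin N → ℤ,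
          (∀ k : Fin N, a k = M * j k) ∧ (∑ k : Fin N, j k) = ρ} := by
  obtain ⟨e, he⟩ := hdq
  have hd0 : d ≠ 0 := by omega
  have hM0 : (0:ℤ) < M := by omega
  have hdM0 : (0:ℤ) < d * M := by positivity
  have hc : q * (q - 1) / d = e * (q - 1) := by
    have h : q * (q - 1) = (e * (q - 1)) * d := by rw [he]; ring
    rw [h, Int.mul_ediv_cancel _ hd0]
  have hqd : q / d = e := by rw [he, Int.mul_ediv_cancel_left _ hd0]
  have key1 : ∀ i : ℤ, 1 ≤ i → i ≤ M - 1 →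
      ((M - i) * (q + 1)) / M = (q + 1) + (-(i * (q+1)))/M := by
    intro i h1 h2
    have h : (M - i) * (q + 1) = -(i*(q+1)) + (q+1) * M := by ring
    rw [h, Int.add_mul_ediv_right _ _ hM0.ne']
    ring
  have key2 : ∀ i : ℤ, (-(M - i) * q^3) / (d*M) = (i * q^3)/(d*M) - d^2*e^3 := by
    intro i
    have h : -(M - i) * q^3 = i*q^3 + (-(d^2*e^3)) * (d*M) := by rw [he]; ring
    rw [h, Int.add_mul_ediv_right _ _ hdM0.ne']
    ring
  have hq3 : d^2*e^3 = e*(q-1)*(q+1) + e := by rw [he]; ring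
  -- the core arithmetic equivalence, with division results generalized
  have core : ∀ i S : ℤ,
      (S + (N:ℤ) + e*(q-1) * ((q + 1) + (-(i * (q+1)))/M)
        + ((i * q^3)/(d*M) - d^2*e^3) = ρ) ↔
      (S = (e + e*(q-1) * (-((-(i * (q+1)))/M)) - (i * q^3)/(d*M) - 1) + 1 - (N:ℤ) + ρ) := by
    intro i S
    generalize (-(i * (q+1)))/M = C
    generalize (i * q^3)/(d*M) = D
    constructor <;> intro h
    · linear_combination h + hq3
    · linear_combination h - hq3
  ext a
  simp only [Set.mem_setOf_eq, Set.mem_union]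
  constructor
  · rintro ⟨u, hu0, hu1, hdvd, hsum⟩
    by_cases hu : u = 0
    · right
      subst hu
      have hz : ∀ k : Fin N, ⌈((a k : ℤ) : ℚ) / (M : ℚ)⌉ = a k / M := by
        intro k
        have h := hdvd k; rw [add_zero] at h
        obtain ⟨m, hm⟩ := h
        rw [hm, ceil_Mj M m hM0, Int.mul_ediv_cancel_left _ hM0.ne']
      refine ⟨fun k => a k / M, fun k => ?_, ?_⟩
      · have h := hdvd k; rw [add_zero] at h
        obtain ⟨m, hm⟩ := h
        show a k = M * (a k / M)
        rw [hm, Int.mul_ediv_cancel_left _ hM0.ne']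
      · rw [Finset.sum_congr rfl (fun k _ => hz k)] at hsum
        simpa using hsum
    · left
      refine ⟨M - u, by omega, by omega, fun k => (a k + u)/M - 1, fun k => ?_, ?_⟩
      · obtain ⟨m, hm⟩ := hdvd k
        have hdiv : (a k + u)/M = m := by rw [hm, Int.mul_ediv_cancel_left _ hM0.ne']
        show a k = M * ((a k + u)/M - 1) + (M - u)
        rw [hdiv]
        have hx : M * (m - 1) = M * m - M := by ring
        omega
      · have hz : ∀ k : Fin N, ⌈((a k : ℤ) : ℚ) / (M : ℚ)⌉ = ((a k + u)/M - 1) + 1 := by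
          intro k
          obtain ⟨m, hm⟩ := hdvd k
          have hdiv : (a k + u)/M = m := by rw [hm, Int.mul_ediv_cancel_left _ hM0.ne']
          have ha : a k = M * (m - 1) + (M - u) := by
            have hx : M * (m - 1) = M * m - M := by ring
            omega
          rw [ha, ceil_Mji M (m-1) (M-u) (by omega) (by omega)]
          rw [show M * (m-1) + (M - u) + u = M * m by ring, Int.mul_ediv_cancel_left _ hM0.ne']
        rw [Finset.sum_congr rfl (fun k _ => hz k), Finset.sum_add_distrib,
          Finset.sum_const, Finset.card_univ, Fintype.card_fin, nsmul_eq_mul, mul_one,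
          fl' _ _ hM0, fl' _ _ hdM0, hc,
          show u * (q+1) = (M - (M - u)) * (q+1) by ring,
          show -u * q^3 = -(M - (M - u)) * q^3 by ring,
          key1 (M - u) (by omega) (by omega), key2 (M - u)] at hsum
        rw [ce' _ _ hM0, fl' _ _ hdM0, hc, hqd]
        exact (core (M - u) _).mp hsum
  · rintro (⟨i, h1, h2, j, hj, hsumj⟩ | ⟨j, hj, hsumj⟩)
    · refine ⟨M - i, by omega, by omega, fun k => ?_, ?_⟩
      · rw [hj k]; exact ⟨j k + 1, by ring⟩
      · have hz : ∀ k : Fin N, ⌈((a k : ℤ) : ℚ) / (M : ℚ)⌉ = j k + 1 := by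
          intro k; rw [hj k]; exact ceil_Mji M (j k) i h1 h2
        rw [Finset.sum_congr rfl (fun k _ => hz k), Finset.sum_add_distrib,
          Finset.sum_const, Finset.card_univ, Fintype.card_fin, nsmul_eq_mul, mul_one,
          fl' _ _ hM0, fl' _ _ hdM0, hc,
          key1 i h1 h2, key2 i]
        rw [ce' _ _ hM0, fl' _ _ hdM0, hc, hqd] at hsumj
        exact (core i _).mpr hsumj
    · refine ⟨0, le_refl 0, by omega, fun k => by rw [hj k, add_zero]; exact ⟨j k, rfl⟩, ?_⟩
      have hz : ∀ k : Fin N, ⌈((a k : ℤ) : ℚ) / (M : ℚ)⌉ = j k := by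
        intro k; rw [hj k]; exact ceil_Mj M (j k) hM0
      rw [Finset.sum_congr rfl (fun k _ => hz k)]
      simp [hsumj]
end
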